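/- arXiv:1507.07218 — 8 statements merged into one kernel-verified Lean document; each statement's English description precedes it below -/
import Mathlib

section
/- There exists a multi-coupling π° of P₁,…,P_N that attains the supremum of ∫ ‖x̄(x)‖² dπ(x) over all multi-couplings π of P₁,…,P_N (i.e. the maximization of the second moment of the coordinate average over couplings is attained). -/
open MeasureTheory ENNReal

noncomputable section

/-- Euclidean space `ℝ^d`. -/
abbrev Euc (d : ℕ) := EuclideanSpace ℝ (Fin d)

/-- The (topological) support of a measure on `ℝ^d`: the set of points all of whose
neighborhoods have positive measure. -/
def msupp {d : ℕ} (μ : MeasureTheory.Measure (Euc d)) : Set (Euc d) :=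
  {x | ∀ U ∈ nhds x, μ U ≠ 0}

/-- A discrete probability measure: a probability measure with finite support. -/
def IsDiscreteProb {d : ℕ} (μ : MeasureTheory.Measure (Euc d)) : Prop :=
  IsProbabilityMeasure μ ∧ (msupp μ).Finite

/-- Finite second moment. -/
def FinSecondMoment {d : ℕ} (μ : MeasureTheory.Measure (Euc d)) : Prop :=
  ∫⁻ x, (‖x‖₊ : ℝ≥0∞) ^ 2 ∂μ < ⊤

/-- A coupling of `P` and `Q`: a measure on the product whose first marginal is `P`
and second marginal is `Q`. -/
def IsCoupling {d : ℕ} (γ : MeasureTheory.Measure (Euc d × Euc d))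
    (P Q : MeasureTheory.Measure (Euc d)) : Prop :=
  γ.map Prod.fst = P ∧ γ.map Prod.snd = Q

/-- Squared 2-Wasserstein distance: infimum of the quadratic transport cost over couplings. -/
def W2sq {d : ℕ} (P Q : MeasureTheory.Measure (Euc d)) : ℝ≥0∞ :=
  ⨅ γ ∈ {γ | IsCoupling γ P Q}, ∫⁻ p, (‖p.1 - p.2‖₊ : ℝ≥0∞) ^ 2 ∂γ

/-- A barycenter of `P 0, …, P (N-1)`: a probability measure with finite second moment
minimizing the sum of squared Wasserstein distances over all such measures. -/
def IsBarycenter {d N : ℕ} (P : Fin N → MeasureTheory.Measure (Euc d))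
    (Pbar : MeasureTheory.Measure (Euc d)) : Prop :=
  IsProbabilityMeasure Pbar ∧ FinSecondMoment Pbar ∧
    ∀ Q : MeasureTheory.Measure (Euc d), IsProbabilityMeasure Q → FinSecondMoment Q →
      ∑ i, W2sq Pbar (P i) ≤ ∑ i, W2sq Q (P i)

/-- A multi-coupling of `P 0, …, P (N-1)`: a probability measure on `(ℝ^d)^N` whose
`i`-th coordinate marginal is `P i`. -/
def IsMultiCoupling {d N : ℕ} (π : MeasureTheory.Measure (Fin N → Euc d))
    (P : Fin N → MeasureTheory.Measure (Euc d)) : Prop :=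
  IsProbabilityMeasure π ∧ ∀ i, π.map (fun x => x i) = P i

/-- The averaging map `(x₁, …, x_N) ↦ (x₁ + ⋯ + x_N)/N`. -/
def avgMap (d N : ℕ) : (Fin N → Euc d) → Euc d := fun x => (N : ℝ)⁻¹ • ∑ i, x i

/-- The set `S` of all centroids of support points, one from each measure. -/
def centroidSet {d N : ℕ} (P : Fin N → MeasureTheory.Measure (Euc d)) : Set (Euc d) :=
  {s | ∃ x : Fin N → Euc d, (∀ i, x i ∈ msupp (P i)) ∧ s = (N : ℝ)⁻¹ • ∑ i, x i}

lemma msupp_compl_null {d : ℕ} (μ : MeasureTheory.Measure (Euc d)) : μ (msupp μ)ᶜ = 0 := by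
  obtain ⟨S', hsub, hcount, hunion⟩ :=
    TopologicalSpace.isOpen_sUnion_countable {U : Set (Euc d) | IsOpen U ∧ μ U = 0}
      (fun U hU => hU.1)
  have hcover : (msupp μ)ᶜ ⊆ ⋃₀ {U : Set (Euc d) | IsOpen U ∧ μ U = 0} := by
    intro x hx
    simp only [msupp, Set.mem_compl_iff, Set.mem_setOf_eq] at hx
    push_neg at hx
    obtain ⟨U, hU, hU0⟩ := hx
    exact ⟨interior U, ⟨isOpen_interior, measure_mono_null interior_subset hU0⟩,
      mem_interior_iff_mem_nhds.2 hU⟩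
  refine measure_mono_null (hcover.trans ?_) ((measure_sUnion_null_iff hsub).2 ?_)
  · rw [hunion]
  · exact fun U hU => (hcount hU).2

lemma measure_finset_eq_sum {α : Type*} [MeasurableSpace α] [MeasurableSingletonClass α]
    (π : MeasureTheory.Measure α) (s : Finset α) : π ↑s = ∑ t ∈ s, π {t} := by
  classical
  rw [← Set.biUnion_of_singleton (↑s : Set α)]
  rw [show (⋃ x ∈ (↑s : Set α), {x}) = ⋃ x ∈ s, ({x} : Set α) by simp]
  exact measure_biUnion_finset
    (fun a _ b _ hab => by simpa [Set.disjoint_singleton] using hab)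
    (fun b _ => measurableSet_singleton b)

open Classical in
lemma meas_eq_sum_ite {α : Type*} [MeasurableSpace α] [MeasurableSingletonClass α]
    (π : MeasureTheory.Measure α) (T : Finset α) (hT : π (↑T)ᶜ = 0) (A : Set α) :
    π A = ∑ t ∈ T, if t ∈ A then π {t} else 0 := by
  classical
  have hdiff : π (A \ ↑T) = 0 := measure_mono_null (fun x hx => hx.2) hT
  have h1 : π A = π (A ∩ ↑T) := by
    have h := measure_inter_add_diff (μ := π) A (T.measurableSet)
    rw [hdiff, add_zero] at h
    exact h.symm
  have h2 : A ∩ ↑T = ↑(T.filter (· ∈ A)) := by ext x; simp [and_comm]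
  rw [h1, h2, measure_finset_eq_sum, Finset.sum_filter]

/-- there exists a multi-coupling of `P₁, …, P_N` attaining the supremum of the
second moment of the coordinate average over all multi-couplings. -/
theorem stmt0 {d N : ℕ} (P : Fin N → MeasureTheory.Measure (Euc d))
    (hP : ∀ i, IsDiscreteProb (P i)) :
    ∃ π₀ : MeasureTheory.Measure (Fin N → Euc d), IsMultiCoupling π₀ P ∧
      ∀ π : MeasureTheory.Measure (Fin N → Euc d), IsMultiCoupling π P →
        ∫⁻ x, (‖avgMap d N x‖₊ : ℝ≥0∞) ^ 2 ∂π ≤ ∫⁻ x, (‖avgMap d N x‖₊ : ℝ≥0∞) ^ 2 ∂π₀ := by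
  classical
  have hPprob : ∀ i, IsProbabilityMeasure (P i) := fun i => (hP i).1
  set F : Fin N → Finset (Euc d) := fun i => (hP i).2.toFinset with hFdef
  have hFcoe : ∀ i, (↑(F i) : Set (Euc d)) = msupp (P i) := fun i => Set.Finite.coe_toFinset _
  have hPnull : ∀ i, P i (↑(F i))ᶜ = 0 := fun i => by rw [hFcoe]; exact msupp_compl_null _
  set T : Finset (Fin N → Euc d) := Fintype.piFinset F with hTdef
  set L : ((Fin N → Euc d) → ℝ≥0∞) → ℝ≥0∞ :=
    fun w => ∑ t ∈ T, w t * (‖avgMap d N t‖₊ : ℝ≥0∞) ^ 2 with hLdef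
  set K : Set ((Fin N → Euc d) → ℝ≥0∞) :=
    {w | (∑ t ∈ T, w t) = 1 ∧
      ∀ i, ∀ s ∈ F i, ∑ t ∈ T.filter (fun t => t i = s), w t = P i {s}} with hKdef
  -- decomposition of P i total mass
  have hPsum : ∀ i, ∑ s ∈ F i, P i {s} = 1 := by
    intro i
    have h := meas_eq_sum_ite (P i) (F i) (hPnull i) Set.univ
    haveI := hPprob i
    simpa [measure_univ] using h.symm
  -- concentration of multi-couplings on T
  have hconc : ∀ π : Measure (Fin N → Euc d), IsMultiCoupling π P → π (↑T)ᶜ = 0 := by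
    intro π hπ
    have hsub : (↑T : Set (Fin N → Euc d))ᶜ ⊆
        ⋃ i, (fun x : Fin N → Euc d => x i) ⁻¹' (↑(F i))ᶜ := by
      intro x hx
      simp only [Set.mem_compl_iff, Finset.mem_coe, Fintype.mem_piFinset, hTdef] at hx
      push_neg at hx
      obtain ⟨i, hi⟩ := hx
      exact Set.mem_iUnion.2 ⟨i, hi⟩
    refine measure_mono_null hsub (measure_iUnion_null fun i => ?_)
    have hmap : π ((fun x : Fin N → Euc d => x i) ⁻¹' (↑(F i))ᶜ) = P i (↑(F i))ᶜ := by
      rw [← hπ.2 i, Measure.map_apply (measurable_pi_apply i) (F i).measurableSet.compl]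
    rw [hmap]; exact hPnull i
  -- applying weighted sums of diracs to sets
  have hmw_apply : ∀ (w : (Fin N → Euc d) → ℝ≥0∞) (A : Set (Fin N → Euc d)), MeasurableSet A →
      (∑ t ∈ T, w t • Measure.dirac t) A = ∑ t ∈ T, if t ∈ A then w t else 0 := by
    intro w A hA
    rw [Measure.finset_sum_apply]
    refine Finset.sum_congr rfl fun t _ => ?_
    rw [Measure.smul_apply, Measure.dirac_apply' _ hA]
    by_cases h : t ∈ A <;> simp [Set.indicator_apply, h]
  -- weights in K give multi-couplings
  have hB : ∀ w ∈ K, IsMultiCoupling (∑ t ∈ T, w t • Measure.dirac t) P := by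
    intro w hw
    constructor
    · constructor
      rw [hmw_apply w Set.univ MeasurableSet.univ]
      simpa using hw.1
    · intro i
      apply Measure.ext
      intro A hA
      rw [Measure.map_apply (measurable_pi_apply i) hA,
        hmw_apply w _ (measurable_pi_apply i hA),
        meas_eq_sum_ite (P i) (F i) (hPnull i) A]
      simp only [Set.mem_preimage]
      have hmaps : ∀ t ∈ T, t i ∈ F i := fun t ht => (Fintype.mem_piFinset.1 ht) i
      rw [← Finset.sum_fiberwise_of_maps_to hmaps (fun t => if t i ∈ A then w t else 0)]
      refine Finset.sum_congr rfl fun s hs => ?_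
      rw [← hw.2 i s hs]
      by_cases hsA : s ∈ A
      · rw [if_pos hsA]
        refine Finset.sum_congr rfl fun t ht => ?_
        have hts : t i = s := (Finset.mem_filter.1 ht).2
        rw [if_pos (by rw [hts]; exact hsA)]
      · rw [if_neg hsA]
        refine Finset.sum_eq_zero fun t ht => ?_
        have hts : t i = s := (Finset.mem_filter.1 ht).2
        rw [if_neg (by rw [hts]; exact hsA)]
  -- lintegral against weighted sums of diracs
  have hL_eq : ∀ w : (Fin N → Euc d) → ℝ≥0∞,
      ∫⁻ x, (‖avgMap d N x‖₊ : ℝ≥0∞) ^ 2 ∂(∑ t ∈ T, w t • Measure.dirac t) = L w := by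
    intro w
    rw [lintegral_finset_sum_measure]
    refine Finset.sum_congr rfl fun t _ => ?_
    rw [lintegral_smul_measure, lintegral_dirac, smul_eq_mul]
  -- representation of concentrated measures
  have hrep : ∀ π : Measure (Fin N → Euc d), π (↑T)ᶜ = 0 →
      π = ∑ t ∈ T, π {t} • Measure.dirac t := by
    intro π hπ
    apply Measure.ext
    intro A hA
    rw [meas_eq_sum_ite π T hπ A, hmw_apply _ A hA]
  -- weights of multi-couplings lie in K
  have hAK : ∀ π : Measure (Fin N → Euc d), IsMultiCoupling π P → (fun t => π {t}) ∈ K := by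
    intro π hπ
    have hTc := hconc π hπ
    constructor
    · have h := meas_eq_sum_ite π T hTc Set.univ
      haveI := hπ.1
      simp only [Set.mem_univ, if_true] at h
      rw [← h, measure_univ]
    · intro i s hs
      have hpre : π ((fun x : Fin N → Euc d => x i) ⁻¹' {s}) = P i {s} := by
        rw [← hπ.2 i, Measure.map_apply (measurable_pi_apply i) (measurableSet_singleton s)]
      rw [← hpre, meas_eq_sum_ite π T hTc, Finset.sum_filter]
      exact Finset.sum_congr rfl fun t _ => by simp [Set.mem_preimage]
  -- K is nonempty
  have hK_ne : K.Nonempty := by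
    refine ⟨fun t => ∏ j, P j {t j}, ?_, ?_⟩
    · beta_reduce
      rw [hTdef, ← Finset.prod_univ_sum F (fun j s' => P j {s'})]
      simp [hPsum]
    · intro i s hs
      have hfilter : T.filter (fun t => t i = s) = Fintype.piFinset (Function.update F i {s}) := by
        ext t
        simp only [Finset.mem_filter, Fintype.mem_piFinset, hTdef]
        constructor
        · rintro ⟨h1, h2⟩ j
          by_cases hj : j = i
          · subst hj; simp [Function.update_self, h2]
          · rw [Function.update_of_ne hj]; exact h1 j
        · intro h
          have hti : t i = s := by
            have := h i
            rwa [Function.update_self, Finset.mem_singleton] at this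
          refine ⟨fun j => ?_, hti⟩
          by_cases hj : j = i
          · subst hj; rw [hti]; exact hs
          · have := h j; rwa [Function.update_of_ne hj] at this
      beta_reduce
      rw [hfilter, ← Finset.prod_univ_sum (Function.update F i {s}) (fun j s' => P j {s'})]
      rw [Fintype.prod_eq_single i (fun j hj => by rw [Function.update_of_ne hj]; exact hPsum j)]
      simp [Function.update_self]
  -- K is closed, hence compact
  have hK_closed : IsClosed K := by
    have hKeq : K = {w : (Fin N → Euc d) → ℝ≥0∞ | (∑ t ∈ T, w t) = 1} ∩
        ⋂ i, ⋂ s ∈ F i,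
          {w : (Fin N → Euc d) → ℝ≥0∞ | ∑ t ∈ T.filter (fun t => t i = s), w t = P i {s}} := by
      ext w
      simp only [hKdef, Set.mem_setOf_eq, Set.mem_inter_iff, Set.mem_iInter]
    rw [hKeq]
    refine IsClosed.inter (isClosed_eq ?_ continuous_const)
      (isClosed_iInter fun i => isClosed_iInter fun s => isClosed_iInter fun _ =>
        isClosed_eq ?_ continuous_const)
    · exact continuous_finset_sum _ fun t _ => continuous_apply t
    · exact continuous_finset_sum _ fun t _ => continuous_apply t
  have hK_compact : IsCompact K := hK_closed.isCompact
  -- L is continuous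
  have hL_cont : Continuous L := by
    refine continuous_finset_sum _ fun t _ => ?_
    exact (ENNReal.continuous_mul_const (by
      exact ENNReal.pow_ne_top ENNReal.coe_ne_top)).comp (continuous_apply t)
  obtain ⟨w₀, hw₀K, hw₀max⟩ := hK_compact.exists_isMaxOn hK_ne hL_cont.continuousOn
  refine ⟨∑ t ∈ T, w₀ t • Measure.dirac t, hB w₀ hw₀K, ?_⟩
  intro π hπ
  have h1 : ∫⁻ x, (‖avgMap d N x‖₊ : ℝ≥0∞) ^ 2 ∂π = L (fun t => π {t}) := by
    conv_lhs => rw [hrep π (hconc π hπ)]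
    exact hL_eq _
  rw [h1, hL_eq w₀]
  exact hw₀max (hAK π hπ)
end
end

section
/- Let π° be any multi-coupling of P₁,…,P_N maximizing ∫ ‖x̄(x)‖² dπ(x) over all multi-couplings, and let P̄ = x̄_* π° be the pushforward of π° under the averaging map. Then supp(P̄) ⊆ S, and Σᵢ₌₁ᴺ W₂(P̄,Pᵢ)² = inf_{P ∈ 𝒫²(ℝ^d)} Σᵢ₌₁ᴺ W₂(P,Pᵢ)² = inf over probability measures P supported in S of Σᵢ₌₁ᴺ W₂(P,Pᵢ)²; in particular P̄ is a barycenter of P₁,…,P_N. -/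
open MeasureTheory ENNReal
set_option maxHeartbeats 400000

noncomputable section

section Msupp
variable {d : ℕ} (μ : MeasureTheory.Measure (Euc d))

lemma compl_msupp_eq : (msupp μ)ᶜ = ⋃₀ {U | IsOpen U ∧ μ U = 0} := by
  ext x
  simp only [Set.mem_compl_iff, msupp, Set.mem_setOf_eq, not_forall, Set.mem_sUnion]
  constructor
  · rintro ⟨U, hU, hμU⟩
    push_neg at hμU
    exact ⟨interior U, ⟨isOpen_interior, measure_mono_null interior_subset hμU⟩,
      mem_interior_iff_mem_nhds.2 hU⟩
  · rintro ⟨U, ⟨hUo, hUμ⟩, hxU⟩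
    exact ⟨U, hUo.mem_nhds hxU, by simp [hUμ]⟩

lemma isClosed_msupp : IsClosed (msupp μ) := by
  rw [← isOpen_compl_iff, compl_msupp_eq]
  exact isOpen_sUnion fun U hU => hU.1

lemma measure_compl_msupp : μ (msupp μ)ᶜ = 0 := by
  rw [compl_msupp_eq]
  obtain ⟨T, hTsub, hTc, hTeq⟩ :=
    TopologicalSpace.isOpen_sUnion_countable {U | IsOpen U ∧ μ U = 0} (fun U hU => hU.1)
  rw [← hTeq]
  exact (measure_sUnion_null_iff hTsub).2 fun U hU => (hTc hU).2

lemma ae_mem_msupp : ∀ᵐ x ∂μ, x ∈ msupp μ := by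
  rw [MeasureTheory.ae_iff]
  exact measure_compl_msupp μ

end Msupp

section SecondMoment
variable {d : ℕ}

lemma finSecondMoment_of_ae_finite {μ : MeasureTheory.Measure (Euc d)}
    [IsProbabilityMeasure μ] {s : Set (Euc d)} (hs : s.Finite) (h : ∀ᵐ x ∂μ, x ∈ s) :
    ∫⁻ x, (‖x‖₊ : ℝ≥0∞) ^ 2 ∂μ < ⊤ := by
  set C : ℝ≥0∞ := ∑ y ∈ hs.toFinset, (‖y‖₊ : ℝ≥0∞) ^ 2 with hC
  have hbound : ∀ᵐ x ∂μ, (‖x‖₊ : ℝ≥0∞) ^ 2 ≤ C := by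
    filter_upwards [h] with x hx
    exact Finset.single_le_sum (f := fun y => (‖y‖₊ : ℝ≥0∞) ^ 2)
      (fun y _ => zero_le) (hs.mem_toFinset.2 hx)
  calc ∫⁻ x, (‖x‖₊ : ℝ≥0∞) ^ 2 ∂μ ≤ ∫⁻ _, C ∂μ := lintegral_mono_ae hbound
    _ = C := by simp
    _ < ⊤ := by
      rw [hC]
      exact ENNReal.sum_lt_top.2 fun y _ => by
        exact ENNReal.pow_lt_top ENNReal.coe_lt_top

end SecondMoment

section Pointwise
variable {d N : ℕ}

lemma sum_avg_smul (x : Fin N → Euc d) (hN : N ≠ 0) :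
    ∑ i, x i = (N : ℝ) • avgMap d N x := by
  rw [avgMap, smul_smul, mul_inv_cancel₀ (by exact_mod_cast hN), one_smul]

lemma sum_sq_dist_eq (x : Fin N → Euc d) (z : Euc d) :
    ∑ i, ‖z - x i‖ ^ 2
      = (∑ i, ‖avgMap d N x - x i‖ ^ 2) + (N : ℝ) * ‖z - avgMap d N x‖ ^ 2 := by
  rcases Nat.eq_zero_or_pos N with h | h
  · subst h; simp
  set a := avgMap d N x with ha
  have hsum : ∑ i, (a - x i) = (0 : Euc d) := by
    rw [Finset.sum_sub_distrib, sum_avg_smul x h.ne', ← ha]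
    simp only [Finset.sum_const, Finset.card_univ, Fintype.card_fin]
    rw [← Nat.cast_smul_eq_nsmul ℝ, sub_self]
  have key : ∀ i : Fin N, ‖z - x i‖ ^ 2
      = ‖z - a‖ ^ 2 + 2 * (inner ℝ (z - a) (a - x i) : ℝ) + ‖a - x i‖ ^ 2 := by
    intro i
    have h1 : z - x i = (z - a) + (a - x i) := by abel
    rw [h1, norm_add_sq_real]
  calc ∑ i, ‖z - x i‖ ^ 2
      = ∑ i, (‖z - a‖ ^ 2 + 2 * (inner ℝ (z - a) (a - x i) : ℝ) + ‖a - x i‖ ^ 2) :=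
        Finset.sum_congr rfl fun i _ => key i
    _ = (N : ℝ) * ‖z - a‖ ^ 2 + 2 * (inner ℝ (z - a) (∑ i, (a - x i)) : ℝ)
        + ∑ i, ‖a - x i‖ ^ 2 := by
        rw [Finset.sum_add_distrib, Finset.sum_add_distrib, inner_sum, Finset.mul_sum]
        simp only [Finset.sum_const, Finset.card_univ, Fintype.card_fin, nsmul_eq_mul]
    _ = _ := by rw [hsum, inner_zero_right]; ring

lemma enn_norm_sq (v : Euc d) : (‖v‖₊ : ℝ≥0∞) ^ 2 = ENNReal.ofReal (‖v‖ ^ 2) := by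
  rw [ENNReal.ofReal_pow (norm_nonneg v), ofReal_norm, enorm_eq_nnnorm]

lemma enn_sum_norm_sq (v : Fin N → Euc d) :
    ∑ i, (‖v i‖₊ : ℝ≥0∞) ^ 2 = ENNReal.ofReal (∑ i, ‖v i‖ ^ 2) := by
  rw [ENNReal.ofReal_sum_of_nonneg fun i _ => sq_nonneg _]
  exact Finset.sum_congr rfl fun i _ => enn_norm_sq _

/-- pointwise minimality of the average, ℝ≥0∞ version -/
lemma enn_avg_min (x : Fin N → Euc d) (z : Euc d) :
    ∑ i, (‖avgMap d N x - x i‖₊ : ℝ≥0∞) ^ 2 ≤ ∑ i, (‖z - x i‖₊ : ℝ≥0∞) ^ 2 := by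
  rw [enn_sum_norm_sq, enn_sum_norm_sq]
  apply ENNReal.ofReal_le_ofReal
  rw [sum_sq_dist_eq x z]
  have : 0 ≤ (N : ℝ) * ‖z - avgMap d N x‖ ^ 2 :=
    mul_nonneg (Nat.cast_nonneg N) (sq_nonneg _)
  linarith

/-- pointwise identity, ℝ≥0∞ version -/
lemma enn_avg_identity (x : Fin N → Euc d) :
    (∑ i, (‖avgMap d N x - x i‖₊ : ℝ≥0∞) ^ 2) + (N : ℝ≥0∞) * (‖avgMap d N x‖₊ : ℝ≥0∞) ^ 2
      = ∑ i, (‖x i‖₊ : ℝ≥0∞) ^ 2 := by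
  have h := sum_sq_dist_eq x 0
  simp only [zero_sub, norm_neg] at h
  symm
  rw [enn_sum_norm_sq, h,
    ENNReal.ofReal_add (Finset.sum_nonneg fun i _ => sq_nonneg _)
      (mul_nonneg (Nat.cast_nonneg N) (sq_nonneg _)),
    ENNReal.ofReal_mul (Nat.cast_nonneg N), ENNReal.ofReal_natCast,
    ← enn_sum_norm_sq, ← enn_norm_sq]

lemma continuous_avgMap : Continuous (avgMap d N) :=
  by unfold avgMap; fun_prop

lemma measurable_avgMap : Measurable (avgMap d N) := continuous_avgMap.measurable

end Pointwise

section Helpers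
variable {α β ι : Type*} [MeasurableSpace α] [MeasurableSpace β]

lemma map_finset_sum_measure (s : Finset ι) (μ : ι → Measure α) {f : α → β} (hf : Measurable f) :
    (∑ i ∈ s, μ i).map f = ∑ i ∈ s, (μ i).map f := by
  classical
  induction s using Finset.induction_on with
  | empty => simp
  | insert _ _ hni ih =>
      rw [Finset.sum_insert hni, Finset.sum_insert hni, Measure.map_add _ _ hf, ih]

lemma withDensity_finset_sum (μ : Measure α) (s : Finset ι) (f : ι → α → ℝ≥0∞)
    (hf : ∀ i, Measurable (f i)) :
    μ.withDensity (fun y => ∑ i ∈ s, f i y) = ∑ i ∈ s, μ.withDensity (f i) := by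
  classical
  induction s using Finset.induction_on with
  | empty => simp
  | @insert a s hni ih =>
      have : (fun y => ∑ i ∈ insert a s, f i y)
          = f a + fun y => ∑ i ∈ s, f i y := by
        funext y; simp [Finset.sum_insert hni]
      rw [this, withDensity_add_left (hf a), ih, Finset.sum_insert hni]

end Helpers


section Glue
variable {d N : ℕ}

lemma glue (P : Fin N → MeasureTheory.Measure (Euc d)) (hP : ∀ i, IsDiscreteProb (P i))
    (Q : MeasureTheory.Measure (Euc d)) (hQ : IsProbabilityMeasure Q)
    (γ : Fin N → MeasureTheory.Measure (Euc d × Euc d)) (hγ : ∀ i, IsCoupling (γ i) Q (P i)) :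
    ∃ μ : MeasureTheory.Measure (Euc d × (Fin N → Euc d)),
      μ Set.univ = 1 ∧ ∀ i, μ.map (fun p => (p.1, p.2 i)) = γ i := by
  classical
  set S : Fin N → Finset (Euc d) := fun i => (hP i).2.toFinset with hSdef
  -- the slice measures
  set ν : Fin N → Euc d → MeasureTheory.Measure (Euc d) :=
    fun i t => ((γ i).restrict (Prod.snd ⁻¹' {t})).map Prod.fst with hνdef
  have hν_apply : ∀ i t (A : Set (Euc d)), MeasurableSet A →
      ν i t A = γ i (Prod.fst ⁻¹' A ∩ Prod.snd ⁻¹' {t}) := by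
    intro i t A hA
    rw [hνdef]
    rw [Measure.map_apply measurable_fst hA, Measure.restrict_apply (measurable_fst hA)]
  have hν_le : ∀ i t, ν i t ≤ Q := by
    intro i t
    rw [Measure.le_iff]
    intro A hA
    rw [hν_apply i t A hA, ← (hγ i).1, Measure.map_apply measurable_fst hA]
    exact measure_mono Set.inter_subset_left
  have hν_fin : ∀ i t, IsFiniteMeasure (ν i t) := fun i t =>
    isFiniteMeasure_of_le Q (hν_le i t)
  -- null complement of supports
  have hmsupp_meas : ∀ i, MeasurableSet (msupp (P i)) := fun i =>
    (isClosed_msupp (P i)).measurableSet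
  have hnull : ∀ i, γ i (Prod.snd ⁻¹' ((↑(S i) : Set (Euc d))ᶜ)) = 0 := by
    intro i
    have hcoe : (↑(S i) : Set (Euc d)) = msupp (P i) := (hP i).2.coe_toFinset
    rw [hcoe, ← Measure.map_apply measurable_snd (hmsupp_meas i).compl, (hγ i).2]
    exact measure_compl_msupp (P i)
  have hnull' : ∀ i, γ i ((Prod.snd ⁻¹' (↑(S i) : Set (Euc d)))ᶜ) = 0 := by
    intro i; rw [← Set.preimage_compl]; exact hnull i
  -- densities
  set f : Fin N → Euc d → Euc d → ℝ≥0∞ := fun i t => (ν i t).rnDeriv Q with hfdef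
  have hf_meas : ∀ i t, Measurable (f i t) := fun i t => Measure.measurable_rnDeriv _ _
  have hwd : ∀ i t, Q.withDensity (f i t) = ν i t := by
    intro i t
    haveI := hν_fin i t
    haveI := Measure.haveLebesgueDecomposition_of_finiteMeasure (μ := ν i t) (ν := Q)
    exact Measure.withDensity_rnDeriv_eq _ _ (Measure.absolutelyContinuous_of_le (hν_le i t))
  -- the slices sum to Q
  have hν_sum : ∀ i, ∑ t ∈ S i, ν i t = Q := by
    intro i
    ext A hA
    rw [Measure.finset_sum_apply]
    have h1 : ∀ t ∈ S i, ν i t A = γ i (Prod.fst ⁻¹' A ∩ Prod.snd ⁻¹' {t}) :=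
      fun t _ => hν_apply i t A hA
    rw [Finset.sum_congr rfl h1,
      ← measure_biUnion_finset
        (fun t _ u _ htu => Set.disjoint_left.2 (by
          rintro p ⟨-, hpt⟩ ⟨-, hpu⟩
          exact htu ((Set.mem_singleton_iff.1 hpt).symm.trans (Set.mem_singleton_iff.1 hpu))))
        (fun t _ => (measurable_fst hA).inter (measurable_snd (measurableSet_singleton t)))]
    have h2 : (⋃ t ∈ S i, Prod.fst ⁻¹' A ∩ Prod.snd ⁻¹' {t})
        = Prod.fst ⁻¹' A ∩ Prod.snd ⁻¹' (↑(S i) : Set (Euc d)) := by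
      ext p
      simp only [Set.mem_iUnion, Set.mem_inter_iff, Set.mem_preimage, Set.mem_singleton_iff,
        Finset.mem_coe]
      constructor
      · rintro ⟨t, ht, hpA, hpt⟩; exact ⟨hpA, hpt ▸ ht⟩
      · rintro ⟨hpA, hps⟩; exact ⟨p.2, hps, hpA, rfl⟩
    rw [h2, measure_inter_conull (hnull' i), ← Measure.map_apply
      measurable_fst hA, (hγ i).1]
  -- densities sum to 1 a.e.
  have hf_sum : ∀ i, (fun y => ∑ t ∈ S i, f i t y) =ᵐ[Q]
      (1 : Euc d → ℝ≥0∞) := by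
    intro i
    have hmeas : Measurable (fun y => ∑ t ∈ S i, f i t y) :=
      Finset.measurable_sum _ fun t _ => hf_meas i t
    have h1 : Q.withDensity (fun y => ∑ t ∈ S i, f i t y) = Q := by
      rw [withDensity_finset_sum Q (S i) _ (hf_meas i)]
      rw [Finset.sum_congr rfl fun t _ => hwd i t, hν_sum i]
    have h2 := Measure.rnDeriv_withDensity Q hmeas
    rw [h1] at h2
    exact h2.symm.trans (Measure.rnDeriv_self Q)
  have hall : ∀ᵐ y ∂Q, ∀ j, ∑ u ∈ S j, f j u y = 1 := by
    rw [MeasureTheory.ae_all_iff]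
    intro j
    filter_upwards [hf_sum j] with y hy using hy
  -- the glued measure
  set T : Finset (Fin N → Euc d) := Fintype.piFinset S with hTdef
  set g : (Fin N → Euc d) → Euc d → ℝ≥0∞ := fun s y => ∏ j, f j (s j) y with hgdef
  have hg_meas : ∀ s, Measurable (g s) :=
    fun s => Finset.measurable_prod _ fun j _ => hf_meas j (s j)
  set μ : MeasureTheory.Measure (Euc d × (Fin N → Euc d)) :=
    ∑ s ∈ T, (Q.withDensity (g s)).map (fun y => (y, s)) with hμdef
  have hpair_meas : ∀ s : Fin N → Euc d, Measurable (fun y : Euc d => (y, s)) :=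
    fun s => measurable_id.prodMk measurable_const
  have hpair2_meas : ∀ t : Euc d, Measurable (fun y : Euc d => (y, t)) :=
    fun t => measurable_id.prodMk measurable_const
  refine ⟨μ, ?_, ?_⟩
  · -- total mass
    rw [hμdef, Measure.finset_sum_apply]
    have h1 : ∀ s ∈ T, ((Q.withDensity (g s)).map (fun y => (y, s))) Set.univ
        = ∫⁻ y, g s y ∂Q := by
      intro s _
      rw [Measure.map_apply (hpair_meas s) MeasurableSet.univ, Set.preimage_univ,
        ← setLIntegral_univ, ← withDensity_apply _ MeasurableSet.univ]
    have hg_total : (fun y => ∑ s ∈ T, g s y) =ᵐ[Q]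
        (1 : Euc d → ℝ≥0∞) := by
      filter_upwards [hall] with y hy
      have hpt : ∑ s ∈ T, g s y = ∏ j, ∑ u ∈ S j, f j u y := by
        rw [Finset.prod_univ_sum]
      rw [hpt, Finset.prod_eq_one fun j _ => hy j]
      rfl
    rw [Finset.sum_congr rfl h1, ← lintegral_finset_sum _ fun s _ => hg_meas s,
      lintegral_congr_ae hg_total]
    haveI := hQ
    simp
  · -- marginals
    intro i
    have hφ : Measurable (fun p : Euc d × (Fin N → Euc d) => (p.1, p.2 i)) :=
      measurable_fst.prodMk ((measurable_pi_apply i).comp measurable_snd)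
    rw [hμdef, map_finset_sum_measure T _ hφ]
    have h1 : ∀ s ∈ T, ((Q.withDensity (g s)).map (fun y => (y, s))).map
        (fun p : Euc d × (Fin N → Euc d) => (p.1, p.2 i))
        = (Q.withDensity (g s)).map (fun y => (y, s i)) := by
      intro s _
      rw [Measure.map_map hφ (hpair_meas s)]
      rfl
    rw [Finset.sum_congr rfl h1,
      ← Finset.sum_fiberwise_of_maps_to (fun s hs => (Fintype.mem_piFinset.1 hs) i)
        (fun s => (Q.withDensity (g s)).map (fun y => (y, s i)))]
    have h2 : ∀ t ∈ S i, (∑ s ∈ T.filter (fun s => s i = t),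
        (Q.withDensity (g s)).map (fun y => (y, s i)))
        = (ν i t).map (fun y => (y, t)) := by
      intro t ht
      have hcongr : ∀ s ∈ T.filter (fun s => s i = t),
          (Q.withDensity (g s)).map (fun y => (y, s i))
          = (Q.withDensity (g s)).map (fun y => (y, t)) := by
        intro s hs
        rw [(Finset.mem_filter.1 hs).2]
      set t' : Fin N → Finset (Euc d) := fun j => if j = i then {t} else S j with ht'def
      have hfilter : T.filter (fun s => s i = t) = Fintype.piFinset t' := by
        ext s
        simp only [Finset.mem_filter, Fintype.mem_piFinset, hTdef, ht'def]
        constructor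
        · rintro ⟨hsT, hst⟩ j
          by_cases hj : j = i
          · subst hj; simp [hst]
          · simp only [if_neg hj]; exact hsT j
        · intro h
          constructor
          · intro j
            by_cases hj : j = i
            · subst hj
              have := h j; rw [if_pos rfl, Finset.mem_singleton] at this
              rw [this]; exact ht
            · have := h j; rwa [if_neg hj] at this
          · have := h i; rwa [if_pos rfl, Finset.mem_singleton] at this
      have hdens : (fun y => ∑ s ∈ T.filter (fun s => s i = t), g s y)
          =ᵐ[Q] f i t := by
        filter_upwards [hall] with y hy
        show ∑ s ∈ T.filter (fun s => s i = t), g s y = f i t y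
        rw [hfilter]
        have : ∑ s ∈ Fintype.piFinset t', g s y = ∏ j, ∑ u ∈ t' j, f j u y := by
          rw [Finset.prod_univ_sum]
        rw [this, ← Finset.mul_prod_erase Finset.univ
          (fun j => ∑ u ∈ t' j, f j u y) (Finset.mem_univ i)]
        have h3 : ∀ j ∈ Finset.univ.erase i, ∑ u ∈ t' j, f j u y = 1 := by
          intro j hj
          rw [ht'def]
          simp only [if_neg (Finset.ne_of_mem_erase hj)]
          exact hy j
        rw [Finset.prod_congr rfl h3, Finset.prod_const_one, mul_one, ht'def]
        simp
      calc (∑ s ∈ T.filter (fun s => s i = t),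
            (Q.withDensity (g s)).map (fun y => (y, s i)))
          = ∑ s ∈ T.filter (fun s => s i = t),
            (Q.withDensity (g s)).map (fun y => (y, t)) := Finset.sum_congr rfl hcongr
        _ = (∑ s ∈ T.filter (fun s => s i = t),
            Q.withDensity (g s)).map (fun y => (y, t)) :=
            (map_finset_sum_measure _ _ (hpair2_meas t)).symm
        _ = (Q.withDensity (fun y => ∑ s ∈ T.filter (fun s => s i = t), g s y)).map
            (fun y => (y, t)) := by
            rw [withDensity_finset_sum Q _ _ fun s => hg_meas s]
        _ = (Q.withDensity (f i t)).map (fun y => (y, t)) := by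
            rw [withDensity_congr_ae hdens]
        _ = (ν i t).map (fun y => (y, t)) := by rw [hwd]
    rw [Finset.sum_congr rfl h2]
    -- finally : ∑ t ∈ S i, (ν i t).map (fun y => (y, t)) = γ i
    ext E hE
    rw [Measure.finset_sum_apply]
    have h4 : ∀ t ∈ S i, ((ν i t).map (fun y => (y, t))) E
        = γ i (Prod.fst ⁻¹' ((fun y => (y, t)) ⁻¹' E) ∩ Prod.snd ⁻¹' {t}) := by
      intro t _
      rw [Measure.map_apply (hpair2_meas t) hE, hν_apply i t _ ((hpair2_meas t) hE)]
    rw [Finset.sum_congr rfl h4,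
      ← measure_biUnion_finset
        (fun t _ u _ htu => Set.disjoint_left.2 (by
          rintro p ⟨-, hpt⟩ ⟨-, hpu⟩
          exact htu ((Set.mem_singleton_iff.1 hpt).symm.trans (Set.mem_singleton_iff.1 hpu))))
        (fun t _ => (measurable_fst ((hpair2_meas t) hE)).inter
          (measurable_snd (measurableSet_singleton t)))]
    have h5 : (⋃ t ∈ S i, Prod.fst ⁻¹' ((fun y => (y, t)) ⁻¹' E) ∩ Prod.snd ⁻¹' {t})
        = E ∩ Prod.snd ⁻¹' (↑(S i) : Set (Euc d)) := by
      ext p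
      simp only [Set.mem_iUnion, Set.mem_inter_iff, Set.mem_preimage, Set.mem_singleton_iff,
        Finset.mem_coe]
      constructor
      · rintro ⟨u, hu, hpE, hpu⟩
        subst hpu
        exact ⟨by rwa [Prod.mk.eta] at hpE, hu⟩
      · rintro ⟨hpE, hps⟩
        exact ⟨p.2, hps, by rwa [Prod.mk.eta], rfl⟩
    rw [h5, measure_inter_conull (hnull' i)]

end Glue


section MainAux
variable {d N : ℕ}

lemma meas_cost_i (i : Fin N) :
    Measurable fun x : Fin N → Euc d => (‖avgMap d N x - x i‖₊ : ℝ≥0∞) ^ 2 := by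
  have hc : Continuous fun x : Fin N → Euc d => avgMap d N x - x i :=
    continuous_avgMap.sub (continuous_apply i)
  exact ((ENNReal.continuous_coe.comp hc.nnnorm).measurable).pow_const 2

lemma meas_avgsq :
    Measurable fun x : Fin N → Euc d => (‖avgMap d N x‖₊ : ℝ≥0∞) ^ 2 :=
  ((ENNReal.continuous_coe.comp continuous_avgMap.nnnorm).measurable).pow_const 2

lemma meas_pair_cost :
    Measurable fun p : Euc d × Euc d => (‖p.1 - p.2‖₊ : ℝ≥0∞) ^ 2 := by
  have hc : Continuous fun p : Euc d × Euc d => p.1 - p.2 :=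
    continuous_fst.sub continuous_snd
  exact ((ENNReal.continuous_coe.comp hc.nnnorm).measurable).pow_const 2

lemma meas_eval_sq (i : Fin N) :
    Measurable fun x : Fin N → Euc d => (‖x i‖₊ : ℝ≥0∞) ^ 2 :=
  ((ENNReal.continuous_coe.comp (continuous_apply i).nnnorm).measurable).pow_const 2

lemma meas_pair_cost_i (i : Fin N) :
    Measurable fun p : Euc d × (Fin N → Euc d) => (‖p.1 - p.2 i‖₊ : ℝ≥0∞) ^ 2 := by
  have hc : Continuous fun p : Euc d × (Fin N → Euc d) => p.1 - p.2 i :=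
    continuous_fst.sub ((continuous_apply i).comp continuous_snd)
  exact ((ENNReal.continuous_coe.comp hc.nnnorm).measurable).pow_const 2

lemma meas_snd_cost_i (i : Fin N) :
    Measurable fun p : Euc d × (Fin N → Euc d) => (‖avgMap d N p.2 - p.2 i‖₊ : ℝ≥0∞) ^ 2 := by
  have hc : Continuous fun p : Euc d × (Fin N → Euc d) => avgMap d N p.2 - p.2 i :=
    (continuous_avgMap.comp continuous_snd).sub ((continuous_apply i).comp continuous_snd)
  exact ((ENNReal.continuous_coe.comp hc.nnnorm).measurable).pow_const 2

/-- the key integral identity for multi-couplings -/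
lemma mc_cost_identity (P : Fin N → MeasureTheory.Measure (Euc d))
    (π : MeasureTheory.Measure (Fin N → Euc d)) (hπ : IsMultiCoupling π P) :
    (∑ i, ∫⁻ x, (‖avgMap d N x - x i‖₊ : ℝ≥0∞) ^ 2 ∂π)
      + (N : ℝ≥0∞) * ∫⁻ x, (‖avgMap d N x‖₊ : ℝ≥0∞) ^ 2 ∂π
    = ∑ i, ∫⁻ y, (‖y‖₊ : ℝ≥0∞) ^ 2 ∂(P i) := by
  calc (∑ i, ∫⁻ x, (‖avgMap d N x - x i‖₊ : ℝ≥0∞) ^ 2 ∂π)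
      + (N : ℝ≥0∞) * ∫⁻ x, (‖avgMap d N x‖₊ : ℝ≥0∞) ^ 2 ∂π
      = (∫⁻ x, ∑ i, (‖avgMap d N x - x i‖₊ : ℝ≥0∞) ^ 2 ∂π)
        + ∫⁻ x, (N : ℝ≥0∞) * (‖avgMap d N x‖₊ : ℝ≥0∞) ^ 2 ∂π := by
        rw [lintegral_finset_sum _ fun i _ => meas_cost_i i, lintegral_const_mul _ meas_avgsq]
    _ = ∫⁻ x, ((∑ i, (‖avgMap d N x - x i‖₊ : ℝ≥0∞) ^ 2)
        + (N : ℝ≥0∞) * (‖avgMap d N x‖₊ : ℝ≥0∞) ^ 2) ∂π := by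
        rw [← lintegral_add_left (Finset.measurable_sum _ fun i _ => meas_cost_i i)]
    _ = ∫⁻ x, ∑ i, (‖x i‖₊ : ℝ≥0∞) ^ 2 ∂π :=
        lintegral_congr fun x => enn_avg_identity x
    _ = ∑ i, ∫⁻ x, (‖x i‖₊ : ℝ≥0∞) ^ 2 ∂π :=
        lintegral_finset_sum _ fun i _ => meas_eval_sq i
    _ = ∑ i, ∫⁻ y, (‖y‖₊ : ℝ≥0∞) ^ 2 ∂(P i) := by
        refine Finset.sum_congr rfl fun i _ => ?_
        rw [← hπ.2 i, lintegral_map (measurable_nnnorm.coe_nnreal_ennreal.pow_const 2)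
          (measurable_pi_apply i)]

lemma M_lt_top (P : Fin N → MeasureTheory.Measure (Euc d)) (hP : ∀ i, IsDiscreteProb (P i)) :
    ∑ i, ∫⁻ y, (‖y‖₊ : ℝ≥0∞) ^ 2 ∂(P i) < ⊤ := by
  refine ENNReal.sum_lt_top.2 fun i _ => ?_
  haveI := (hP i).1
  exact finSecondMoment_of_ae_finite (hP i).2 (ae_mem_msupp (P i))

end MainAux

/-- if `π₀` is a multi-coupling of `P₁, …, P_N` maximizing the second moment of
the coordinate average, then the pushforward `P̄` of `π₀` under the averaging map is supported
in `S`, and the sum of squared Wasserstein distances from `P̄` to the `Pᵢ` equals both the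
infimum over all probability measures with finite second moment and the infimum over all
probability measures supported in `S`; in particular `P̄` is a barycenter. -/
theorem stmt1 {d N : ℕ} (P : Fin N → MeasureTheory.Measure (Euc d))
    (hP : ∀ i, IsDiscreteProb (P i))
    (π₀ : MeasureTheory.Measure (Fin N → Euc d)) (hπ₀ : IsMultiCoupling π₀ P)
    (hmax : ∀ π : MeasureTheory.Measure (Fin N → Euc d), IsMultiCoupling π P →
      ∫⁻ x, (‖avgMap d N x‖₊ : ℝ≥0∞) ^ 2 ∂π ≤ ∫⁻ x, (‖avgMap d N x‖₊ : ℝ≥0∞) ^ 2 ∂π₀)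
    (Pbar : MeasureTheory.Measure (Euc d)) (hPbar : Pbar = π₀.map (avgMap d N)) :
    msupp Pbar ⊆ centroidSet P ∧
    (∑ i, W2sq Pbar (P i)) =
      (⨅ Q ∈ {Q : MeasureTheory.Measure (Euc d) | IsProbabilityMeasure Q ∧ FinSecondMoment Q},
        ∑ i, W2sq Q (P i)) ∧
    (∑ i, W2sq Pbar (P i)) =
      (⨅ Q ∈ {Q : MeasureTheory.Measure (Euc d) |
          IsProbabilityMeasure Q ∧ msupp Q ⊆ centroidSet P},
        ∑ i, W2sq Q (P i)) ∧
    IsBarycenter P Pbar := by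
    classical
  haveI hπ₀prob : IsProbabilityMeasure π₀ := hπ₀.1
  -- Pbar basic facts
  haveI hPbar_prob : IsProbabilityMeasure Pbar := by
    rw [hPbar]; exact Measure.isProbabilityMeasure_map measurable_avgMap.aemeasurable
  -- finiteness constant
  set M : ℝ≥0∞ := ∑ i, ∫⁻ y, (‖y‖₊ : ℝ≥0∞) ^ 2 ∂(P i) with hMdef
  have hM_top : M ≠ ⊤ := (M_lt_top P hP).ne
  -- cost of π₀ and monotonicity
  set C : MeasureTheory.Measure (Fin N → Euc d) → ℝ≥0∞ :=
    fun π => ∑ i, ∫⁻ x, (‖avgMap d N x - x i‖₊ : ℝ≥0∞) ^ 2 ∂π with hCdef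
  have hC_min : ∀ π, IsMultiCoupling π P → C π₀ ≤ C π := by
    intro π hπ
    have h0 := mc_cost_identity P π₀ hπ₀
    have h1 := mc_cost_identity P π hπ
    have hJ0top : (N : ℝ≥0∞) * ∫⁻ x, (‖avgMap d N x‖₊ : ℝ≥0∞) ^ 2 ∂π₀ ≠ ⊤ :=
      fun h => hM_top (by rw [hMdef, ← h0, h]; exact (ENNReal.add_eq_top.2 (Or.inr rfl)))
    have hJtop : (N : ℝ≥0∞) * ∫⁻ x, (‖avgMap d N x‖₊ : ℝ≥0∞) ^ 2 ∂π ≠ ⊤ :=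
      fun h => hM_top (by rw [hMdef, ← h1, h]; exact (ENNReal.add_eq_top.2 (Or.inr rfl)))
    have e0 : C π₀ = M - (N : ℝ≥0∞) * ∫⁻ x, (‖avgMap d N x‖₊ : ℝ≥0∞) ^ 2 ∂π₀ :=
      ENNReal.eq_sub_of_add_eq hJ0top h0
    have e1 : C π = M - (N : ℝ≥0∞) * ∫⁻ x, (‖avgMap d N x‖₊ : ℝ≥0∞) ^ 2 ∂π :=
      ENNReal.eq_sub_of_add_eq hJtop h1
    rw [e0, e1]
    exact tsub_le_tsub_left (mul_le_mul_right (hmax π hπ) _) M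
  -- couplings from π₀, giving ∑ W2sq Pbar (P i) ≤ C π₀
  have hW_le_cost : ∀ i, W2sq Pbar (P i)
      ≤ ∫⁻ x, (‖avgMap d N x - x i‖₊ : ℝ≥0∞) ^ 2 ∂π₀ := by
    intro i
    set γ' : MeasureTheory.Measure (Euc d × Euc d) :=
      π₀.map (fun x => (avgMap d N x, x i)) with hγ'def
    have hmeas_pair : Measurable fun x : Fin N → Euc d => (avgMap d N x, x i) :=
      measurable_avgMap.prodMk (measurable_pi_apply i)
    have hcoup : IsCoupling γ' Pbar (P i) := by
      constructor
      · rw [hγ'def, Measure.map_map measurable_fst hmeas_pair, hPbar]; rfl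
      · rw [hγ'def, Measure.map_map measurable_snd hmeas_pair, ← hπ₀.2 i]; rfl
    have hci : W2sq Pbar (P i) ≤ ∫⁻ p, (‖p.1 - p.2‖₊ : ℝ≥0∞) ^ 2 ∂γ' :=
      iInf₂_le γ' hcoup
    rwa [hγ'def, lintegral_map meas_pair_cost hmeas_pair] at hci
  have hA_le_C : ∑ i, W2sq Pbar (P i) ≤ C π₀ :=
    Finset.sum_le_sum fun i _ => hW_le_cost i
  -- the main inequality: C π₀ ≤ ∑ W2sq Q (P i) for every probability measure Q
  have hmain : ∀ Q : MeasureTheory.Measure (Euc d), IsProbabilityMeasure Q →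
      C π₀ ≤ ∑ i, W2sq Q (P i) := by
    intro Q hQ
    rcases Nat.eq_zero_or_pos N with hN | hN
    · subst hN; simp [hCdef]
    apply ENNReal.le_of_forall_pos_le_add
    intro ε hε hlt
    have hne : ∀ i : Fin N, W2sq Q (P i) ≠ ⊤ :=
      fun i => (ENNReal.sum_lt_top.1 hlt i (Finset.mem_univ i)).ne
    set δ : ℝ≥0∞ := (ε : ℝ≥0∞) / N with hδdef
    have hδ0 : δ ≠ 0 :=
      (ENNReal.div_pos (by exact_mod_cast hε.ne') (ENNReal.natCast_ne_top N)).ne'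
    have hchoice : ∀ i : Fin N, ∃ γ : MeasureTheory.Measure (Euc d × Euc d),
        IsCoupling γ Q (P i) ∧
        ∫⁻ p, (‖p.1 - p.2‖₊ : ℝ≥0∞) ^ 2 ∂γ < W2sq Q (P i) + δ := by
      intro i
      have h1 : W2sq Q (P i) < W2sq Q (P i) + δ := ENNReal.lt_add_right (hne i) hδ0
      conv_lhs at h1 => rw [W2sq]
      simp only [iInf_lt_iff, Set.mem_setOf_eq] at h1
      obtain ⟨γ, hγmem, hγlt⟩ := h1
      exact ⟨γ, hγmem, hγlt⟩
    choose γs hγc hγcost using hchoice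
    obtain ⟨μ, hμ1, hμmap⟩ := glue P hP Q hQ γs hγc
    haveI hμprob : IsProbabilityMeasure μ := ⟨hμ1⟩
    set π : MeasureTheory.Measure (Fin N → Euc d) := μ.map Prod.snd with hπdef
    have hφ : ∀ i : Fin N, Measurable (fun p : Euc d × (Fin N → Euc d) => (p.1, p.2 i)) :=
      fun i => measurable_fst.prodMk ((measurable_pi_apply i).comp measurable_snd)
    have hπmc : IsMultiCoupling π P := by
      constructor
      · rw [hπdef]; exact Measure.isProbabilityMeasure_map measurable_snd.aemeasurable
      · intro i
        rw [hπdef, Measure.map_map (measurable_pi_apply i) measurable_snd,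
          show ((fun x : Fin N → Euc d => x i) ∘ Prod.snd)
            = (Prod.snd ∘ fun p : Euc d × (Fin N → Euc d) => (p.1, p.2 i)) from rfl,
          ← Measure.map_map measurable_snd (hφ i), hμmap i]
        exact (hγc i).2
    have step1 : C π = ∑ i, ∫⁻ p, (‖avgMap d N p.2 - p.2 i‖₊ : ℝ≥0∞) ^ 2 ∂μ := by
      rw [hCdef]
      exact Finset.sum_congr rfl fun i _ => by
        rw [hπdef, lintegral_map (meas_cost_i i) measurable_snd]
    have step2 : ∑ i, ∫⁻ p, (‖avgMap d N p.2 - p.2 i‖₊ : ℝ≥0∞) ^ 2 ∂μ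
        ≤ ∑ i, ∫⁻ p, (‖p.1 - p.2 i‖₊ : ℝ≥0∞) ^ 2 ∂μ := by
      rw [← lintegral_finset_sum (μ := μ)
          (f := fun (i : Fin N) (p : Euc d × (Fin N → Euc d)) =>
            (‖avgMap d N p.2 - p.2 i‖₊ : ℝ≥0∞) ^ 2) Finset.univ
          (fun i _ => meas_snd_cost_i i),
        ← lintegral_finset_sum (μ := μ)
          (f := fun (i : Fin N) (p : Euc d × (Fin N → Euc d)) =>
            (‖p.1 - p.2 i‖₊ : ℝ≥0∞) ^ 2) Finset.univ
          (fun i _ => meas_pair_cost_i i)]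
      exact lintegral_mono fun p => enn_avg_min p.2 p.1
    have step3 : ∀ i : Fin N, ∫⁻ p, (‖p.1 - p.2 i‖₊ : ℝ≥0∞) ^ 2 ∂μ
        = ∫⁻ q, (‖q.1 - q.2‖₊ : ℝ≥0∞) ^ 2 ∂(γs i) := by
      intro i
      rw [← hμmap i, lintegral_map meas_pair_cost (hφ i)]
    calc C π₀ ≤ C π := hC_min π hπmc
      _ ≤ ∑ i, ∫⁻ q, (‖q.1 - q.2‖₊ : ℝ≥0∞) ^ 2 ∂(γs i) := by
          rw [step1]
          exact step2.trans (le_of_eq (Finset.sum_congr rfl fun i _ => step3 i))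
      _ ≤ ∑ i, (W2sq Q (P i) + δ) := Finset.sum_le_sum fun i _ => (hγcost i).le
      _ = (∑ i, W2sq Q (P i)) + N * δ := by
          rw [Finset.sum_add_distrib, Finset.sum_const, Finset.card_univ,
            Fintype.card_fin, nsmul_eq_mul]
      _ ≤ (∑ i, W2sq Q (P i)) + ε := by
          gcongr
          rw [hδdef]
          exact ENNReal.mul_div_le
  -- support of Pbar
  have hSfin : (centroidSet P).Finite := by
    apply Set.Finite.subset ((Set.Finite.pi fun i => (hP i).2).image (avgMap d N))
    rintro s ⟨x, hx, rfl⟩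
    exact ⟨x, fun i _ => hx i, rfl⟩
  have hgood : ∀ᵐ x ∂π₀, ∀ i, x i ∈ msupp (P i) := by
    rw [MeasureTheory.ae_all_iff]
    intro i
    rw [MeasureTheory.ae_iff]
    have h0 : π₀ ((fun x : Fin N → Euc d => x i) ⁻¹' (msupp (P i))ᶜ) = 0 := by
      rw [← Measure.map_apply (measurable_pi_apply i)
        (isClosed_msupp (P i)).measurableSet.compl, hπ₀.2 i]
      exact measure_compl_msupp (P i)
    exact h0
  have hPbar_compl : Pbar (centroidSet P)ᶜ = 0 := by
    rw [hPbar, Measure.map_apply measurable_avgMap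
      (Set.Finite.isClosed hSfin).measurableSet.compl]
    refine measure_mono_null ?_ ((MeasureTheory.ae_iff.1 hgood))
    intro x hx
    simp only [Set.mem_setOf_eq]
    intro hall
    exact hx ⟨x, hall, rfl⟩
  have hsupp_sub : msupp Pbar ⊆ centroidSet P := by
    intro x hx
    by_contra hxS
    exact hx (centroidSet P)ᶜ
      ((Set.Finite.isClosed hSfin).isOpen_compl.mem_nhds hxS) hPbar_compl
  have hPbar_ae : ∀ᵐ x ∂Pbar, x ∈ centroidSet P := by
    rw [MeasureTheory.ae_iff]
    exact hPbar_compl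
  have hPbar_mom : FinSecondMoment Pbar :=
    finSecondMoment_of_ae_finite hSfin hPbar_ae
  have hfinal : ∀ Q : MeasureTheory.Measure (Euc d), IsProbabilityMeasure Q →
      ∑ i, W2sq Pbar (P i) ≤ ∑ i, W2sq Q (P i) :=
    fun Q hQ => hA_le_C.trans (hmain Q hQ)
  refine ⟨hsupp_sub, ?_, ?_, hPbar_prob, hPbar_mom, fun Q hQ1 _ => hfinal Q hQ1⟩
  · apply le_antisymm
    · exact le_iInf₂ fun Q hQ => hfinal Q hQ.1
    · exact iInf₂_le Pbar ⟨hPbar_prob, hPbar_mom⟩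
  · apply le_antisymm
    · exact le_iInf₂ fun Q hQ => hfinal Q hQ.1
    · exact iInf₂_le Pbar ⟨hPbar_prob, hsupp_sub⟩
end
end

section
/- Let (y*, z*) be an optimal solution of the barycenter LP for the discrete probability measures P₁,…,P_N. If x_j ∈ S satisfies z*_j > 0, and for each i = 1,…,N a point x_{i kᵢ} ∈ supp(Pᵢ) is chosen with y*_{i j kᵢ} > 0, then x_j = (1/N) Σᵢ₌₁ᴺ x_{i kᵢ}. -/
open MeasureTheory ENNReal

noncomputable section

/-- Feasibility for the barycenter LP: variables `y i j k` (transported mass from the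
candidate barycenter support point `j ∈ S` to the support point `k` of `Pᵢ`) and `z j`
(mass of the barycenter at `j`), subject to nonnegativity, the row constraints
`Σ_k y i j k = z j`, and the column constraints `Σ_j y i j k = Pᵢ({k})`. -/
def LPFeasible {d N : ℕ} (P : Fin N → MeasureTheory.Measure (Euc d))
    (SF : Finset (Euc d)) (suppF : Fin N → Finset (Euc d))
    (y : Fin N → Euc d → Euc d → ℝ) (z : Euc d → ℝ) : Prop :=
  (∀ i j k, 0 ≤ y i j k) ∧ (∀ j, 0 ≤ z j) ∧
  (∀ i, ∀ j ∈ SF, ∑ k ∈ suppF i, y i j k = z j) ∧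
  (∀ i, ∀ k ∈ suppF i, ∑ j ∈ SF, y i j k = (P i {k}).toReal)

/-- The cost `c(y) = Σ_{i,j,k} ‖x_j - x_{ik}‖² y_{ijk}` of the barycenter LP. -/
def LPcost {d N : ℕ} (SF : Finset (Euc d)) (suppF : Fin N → Finset (Euc d))
    (y : Fin N → Euc d → Euc d → ℝ) : ℝ :=
  ∑ i, ∑ j ∈ SF, ∑ k ∈ suppF i, ‖j - k‖ ^ 2 * y i j k

/-- An optimal solution of the barycenter LP: a feasible point attaining the minimum cost. -/
def LPOptimal {d N : ℕ} (P : Fin N → MeasureTheory.Measure (Euc d))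
    (SF : Finset (Euc d)) (suppF : Fin N → Finset (Euc d))
    (y : Fin N → Euc d → Euc d → ℝ) (z : Euc d → ℝ) : Prop :=
  LPFeasible P SF suppF y z ∧
    ∀ y' z', LPFeasible P SF suppF y' z' → LPcost SF suppF y ≤ LPcost SF suppF y'


private lemma stmt6_sum_ind {α : Type*} [DecidableEq α] (s : Finset α) (c : α) (hc : c ∈ s)
    (f : α → ℝ) : ∑ b ∈ s, f b * (if b = c then (1:ℝ) else 0) = f c := by
  simp [mul_ite, Finset.sum_ite_eq', hc]

private lemma stmt6_var {d N : ℕ} (hN : 0 < N) (k : Fin N → Euc d)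
    (j : Euc d) (hne : j ≠ (N:ℝ)⁻¹ • ∑ i, k i) :
    ∑ i, ‖(N:ℝ)⁻¹ • ∑ i', k i' - k i‖^2 < ∑ i, ‖j - k i‖^2 := by
  set m : Euc d := (N:ℝ)⁻¹ • ∑ i', k i' with hm
  have hNne : (N:ℝ) ≠ 0 := Nat.cast_ne_zero.mpr hN.ne'
  have hsum : ∑ i, (m - k i) = 0 := by
    rw [Finset.sum_sub_distrib, Finset.sum_const, Finset.card_univ, Fintype.card_fin,
      ← Nat.cast_smul_eq_nsmul ℝ, hm, smul_smul, mul_inv_cancel₀ hNne, one_smul, sub_self]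
  have key : ∀ i, ‖j - k i‖^2 = ‖m - k i‖^2 + 2 * inner ℝ (j - m) (m - k i) + ‖j - m‖^2 := by
    intro i
    have h : j - k i = (j - m) + (m - k i) := by abel
    rw [h, norm_add_sq_real]
    ring
  have hsum2 : ∑ i, ‖j - k i‖^2
      = ∑ i, ‖m - k i‖^2 + 2 * inner ℝ (j - m) (∑ i, (m - k i)) + N * ‖j - m‖^2 := by
    simp only [key, Finset.sum_add_distrib, inner_sum, Finset.mul_sum]
    rw [Finset.sum_const, Finset.card_univ, Fintype.card_fin, nsmul_eq_mul]
  have hjm : j - m ≠ 0 := sub_ne_zero.mpr hne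
  have hpos : (0:ℝ) < ‖j - m‖^2 := pow_pos (norm_pos_iff.mpr hjm) 2
  have hN' : (1:ℝ) ≤ N := by exact_mod_cast hN
  rw [hsum2, hsum, inner_zero_right]
  nlinarith

/-- for an optimal solution `(y*, z*)` of the barycenter LP, if `x_j ∈ S` has
`z*_j > 0` and for each `i` a support point `k i ∈ supp(Pᵢ)` with `y*_{i j (k i)} > 0` is
chosen, then `x_j` is the centroid `(1/N) Σᵢ k i`. -/
theorem stmt6 {d N : ℕ} (P : Fin N → MeasureTheory.Measure (Euc d))
    (hP : ∀ i, IsDiscreteProb (P i))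
    (SF : Finset (Euc d)) (hSF : ↑SF = centroidSet P)
    (suppF : Fin N → Finset (Euc d)) (hsuppF : ∀ i, ↑(suppF i) = msupp (P i))
    (y : Fin N → Euc d → Euc d → ℝ) (z : Euc d → ℝ)
    (hopt : LPOptimal P SF suppF y z)
    (j : Euc d) (hj : j ∈ SF) (hzj : 0 < z j)
    (k : Fin N → Euc d) (hk : ∀ i, k i ∈ suppF i) (hyk : ∀ i, 0 < y i j (k i)) :
    j = (N : ℝ)⁻¹ • ∑ i, k i := by
  classical
  rcases Nat.eq_zero_or_pos N with hN0 | hN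
  · subst hN0
    have hjc : j ∈ centroidSet P := by rw [← hSF]; exact hj
    obtain ⟨x, -, hx⟩ := hjc
    simpa using hx
  haveI : Nonempty (Fin N) := Fin.pos_iff_nonempty.mp hN
  by_contra hne
  set m : Euc d := (N:ℝ)⁻¹ • ∑ i, k i with hmdef
  have hmS : m ∈ SF := by
    have hmc : m ∈ centroidSet P := ⟨k, fun i => by rw [← hsuppF i]; exact hk i, rfl⟩
    rwa [← Finset.mem_coe, hSF]
  obtain ⟨hynn, hznn, hrow, hcol⟩ := hopt.1
  set ε : ℝ := Finset.univ.inf' Finset.univ_nonempty (fun i => y i j (k i)) with hεdef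
  have hεpos : 0 < ε := (Finset.lt_inf'_iff _).mpr (fun i _ => hyk i)
  have hεle : ∀ i, ε ≤ y i j (k i) := fun i => Finset.inf'_le _ (Finset.mem_univ i)
  obtain ⟨i₀⟩ := ‹Nonempty (Fin N)›
  have hεz : ε ≤ z j := by
    have h1 : y i₀ j (k i₀) ≤ ∑ b ∈ suppF i₀, y i₀ j b :=
      Finset.single_le_sum (fun b _ => hynn i₀ j b) (hk i₀)
    have h2 := hrow i₀ j hj
    linarith [hεle i₀]
  set C : Euc d → ℝ := fun a => (if a = m then (1:ℝ) else 0) - (if a = j then 1 else 0) with hC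
  set y' : Fin N → Euc d → Euc d → ℝ := fun i a b =>
    y i a b + ε * (C a * (if b = k i then 1 else 0)) with hy'
  set z' : Euc d → ℝ := fun a => z a + ε * C a with hz'
  have hjm : j ≠ m := hne
  have hCsum : ∑ a ∈ SF, C a = 0 := by
    rw [hC, Finset.sum_sub_distrib, Finset.sum_ite_eq' SF m (fun _ => (1:ℝ)),
      Finset.sum_ite_eq' SF j (fun _ => (1:ℝ))]
    simp [hmS, hj]
  have hind : ∀ i, ∑ b ∈ suppF i, (if b = k i then (1:ℝ) else 0) = 1 := by
    intro i
    rw [Finset.sum_ite_eq' (suppF i) (k i) (fun _ => (1:ℝ))]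
    simp [hk i]
  have feas : LPFeasible P SF suppF y' z' := by
    refine ⟨?_, ?_, ?_, ?_⟩
    · intro i a b
      simp only [hy', hC]
      rcases eq_or_ne b (k i) with hb | hb
      · rw [hb, if_pos rfl, mul_one]
        rcases eq_or_ne a j with haj | haj
        · rw [haj, if_neg hjm, if_pos rfl]
          have h5 := hεle i
          linarith
        · rw [if_neg haj]
          rcases eq_or_ne a m with ham | ham
          · rw [if_pos ham]
            nlinarith [hynn i a (k i), hεpos.le]
          · rw [if_neg ham]
            simpa using hynn i a (k i)
      · simp [hb, hynn i a b]
    · intro a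
      simp only [hz', hC]
      rcases eq_or_ne a j with haj | haj
      · rw [haj, if_neg hjm, if_pos rfl]
        linarith
      · rw [if_neg haj]
        rcases eq_or_ne a m with ham | ham
        · rw [if_pos ham]
          nlinarith [hznn a, hεpos.le]
        · rw [if_neg ham]
          simpa using hznn a
    · intro i a ha
      simp only [hy', hz']
      rw [Finset.sum_add_distrib, hrow i a ha, ← Finset.mul_sum, ← Finset.mul_sum, hind i,
        mul_one]
    · intro i b hb
      simp only [hy']
      rw [Finset.sum_add_distrib, hcol i b hb, ← Finset.mul_sum]
      have h3 : ∑ a ∈ SF, C a * (if b = k i then (1:ℝ) else 0)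
          = (∑ a ∈ SF, C a) * (if b = k i then (1:ℝ) else 0) := by
        rw [Finset.sum_mul]
      rw [h3, hCsum, zero_mul, mul_zero, add_zero]
  have hcost : LPcost SF suppF y' = LPcost SF suppF y
      + ε * ∑ i, (‖m - k i‖^2 - ‖j - k i‖^2) := by
    unfold LPcost
    simp only [hy', mul_add, Finset.sum_add_distrib]
    congr 1
    rw [Finset.mul_sum]
    refine Finset.sum_congr rfl fun i _ => ?_
    have hinner : ∀ a ∈ SF,
        ∑ b ∈ suppF i, ‖a - b‖^2 * (ε * (C a * (if b = k i then (1:ℝ) else 0)))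
          = ‖a - k i‖^2 * (ε * C a) := by
      intro a _
      have := stmt6_sum_ind (suppF i) (k i) (hk i) (fun b => ‖a - b‖^2 * (ε * C a))
      rw [← this]
      exact Finset.sum_congr rfl fun b _ => by ring
    rw [Finset.sum_congr rfl hinner]
    have h4 : ∀ a ∈ SF, ‖a - k i‖^2 * (ε * C a)
        = ε * ((fun a => ‖a - k i‖^2) a * (if a = m then (1:ℝ) else 0))
          - ε * ((fun a => ‖a - k i‖^2) a * (if a = j then (1:ℝ) else 0)) := by
      intro a _
      simp only [hC]
      ring
    rw [Finset.sum_congr rfl h4, Finset.sum_sub_distrib, ← Finset.mul_sum, ← Finset.mul_sum,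
      stmt6_sum_ind SF m hmS, stmt6_sum_ind SF j hj]
    ring
  have hΔ : ∑ i, (‖m - k i‖^2 - ‖j - k i‖^2) < 0 := by
    rw [Finset.sum_sub_distrib, sub_neg]
    exact stmt6_var hN k j hne
  have hle := hopt.2 y' z' feas
  nlinarith [mul_neg_of_pos_of_neg hεpos hΔ]
end
end

section
/- Let (y*, z*) be an optimal solution of the barycenter LP for the discrete probability measures P₁,…,P_N. Then for every x_j ∈ S with z*_j > 0 and every i = 1,…,N, there is exactly one index k with x_{ik} ∈ supp(Pᵢ) and y*_{ijk} > 0. -/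
open MeasureTheory ENNReal

noncomputable section

/-!
If the optimal plan split the mass `z j` of a barycenter point `j` between two support points of
some `Pᵢ`, redistribute that mass by the product of the conditional plans `y i j · / z j`, sending
each tuple `κ` of support points to its centroid instead of to `j`. The result is again feasible,
and by the parallel axis theorem `∑ i, ‖j - κ i‖² = ∑ i, ‖avg κ - κ i‖² + N ‖j - avg κ‖²` the cost
drops by `N` times the weighted sum of `‖j - avg κ‖²`. Optimality therefore forces every tuple of
positively weighted support points to average to `j`; two tuples differing only in their `i`-th
entry have different averages, so there is a single such entry.
-/

open Finset

theorem Finset.sum_piFinset_prod_mul_apply {ι α R : Type*} [Fintype ι] [DecidableEq ι]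
    [CommSemiring R] (t : ι → Finset α) (p : ι → α → R)
    (hp : ∀ i, ∑ k ∈ t i, p i k = 1) (i₀ : ι) (g : α → R) :
    ∑ κ ∈ Fintype.piFinset t, (∏ i, p i (κ i)) * g (κ i₀) = ∑ k ∈ t i₀, p i₀ k * g k := by
  have hmark : ∀ κ : ι → α,
      (∏ i, p i (κ i)) * g (κ i₀) = ∏ i, p i (κ i) * if i = i₀ then g (κ i) else 1 := by
    intro κ
    rw [prod_mul_distrib, Fintype.prod_ite_eq']
  rw [sum_congr rfl fun κ _ => hmark κ,
    ← prod_univ_sum t fun i k => p i k * if i = i₀ then g k else 1,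
    Fintype.prod_eq_single i₀ fun i hi => by simp [hi, hp]]
  simp

theorem sum_norm_sub_sq_eq_sum_norm_centroid_sub_sq_add {ι E : Type*} [Fintype ι]
    [NormedAddCommGroup E] [InnerProductSpace ℝ E] (x : ι → E) (a : E) :
    ∑ i, ‖a - x i‖ ^ 2 =
      ∑ i, ‖(Fintype.card ι : ℝ)⁻¹ • ∑ i', x i' - x i‖ ^ 2
        + Fintype.card ι * ‖a - (Fintype.card ι : ℝ)⁻¹ • ∑ i', x i'‖ ^ 2 := by
  rcases isEmpty_or_nonempty ι with _ | _
  · simp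
  set n : ℝ := (Fintype.card ι : ℝ)
  set c : E := n⁻¹ • ∑ i', x i'
  have hc : ∑ i, (c - x i) = 0 := by
    rw [sum_sub_distrib, sum_const, card_univ, ← Nat.cast_smul_eq_nsmul ℝ, smul_smul,
      mul_inv_cancel₀ (by positivity), one_smul, sub_self]
  calc ∑ i, ‖a - x i‖ ^ 2
      = ∑ i, (‖a - c‖ ^ 2 + 2 * inner ℝ (a - c) (c - x i) + ‖c - x i‖ ^ 2) := by
        refine sum_congr rfl fun i _ => ?_
        rw [← norm_add_sq_real, sub_add_sub_cancel]
    _ = ∑ i, ‖c - x i‖ ^ 2 + n * ‖a - c‖ ^ 2 := by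
        rw [sum_add_distrib, sum_add_distrib, sum_const, card_univ, nsmul_eq_mul,
          ← mul_sum, ← inner_sum, hc, inner_zero_right]
        ring

theorem Finset.sum_fiberwise_and_of_maps_to {β γ M : Type*} [AddCommMonoid M] [DecidableEq γ]
    {s : Finset β} {t : Finset γ} {g : β → γ} (p : β → Prop) [DecidablePred p]
    (h : ∀ b ∈ s, g b ∈ t) (f : β → M) :
    ∑ c ∈ t, ∑ b ∈ s with p b ∧ g b = c, f b = ∑ b ∈ s with p b, f b := by
  simp_rw [← filter_filter]
  exact sum_fiberwise_of_maps_to (fun b hb => h b (mem_filter.1 hb).1) f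

section DiscreteMultiCoupling

variable {ι α : Type*} [Fintype ι]

def IsDiscreteMultiCoupling [DecidableEq ι] (t : ι → Finset α) (q : (ι → α) → ℝ)
    (μ : ι → α → ℝ) : Prop :=
  ∀ i (g : α → ℝ), ∑ κ ∈ Fintype.piFinset t, q κ * g (κ i) = ∑ k ∈ t i, μ i k * g k

theorem IsDiscreteMultiCoupling.sum_filter_apply_eq [DecidableEq ι] [DecidableEq α]
    {t : ι → Finset α} {q : (ι → α) → ℝ} {μ : ι → α → ℝ} (hq : IsDiscreteMultiCoupling t q μ)
    (i : ι) {k : α} (hk : k ∈ t i) :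
    ∑ κ ∈ Fintype.piFinset t with κ i = k, q κ = μ i k := by
  simpa [sum_filter, hk] using hq i fun k' => if k' = k then 1 else 0

def productCoupling (m : ℝ) (μ : ι → α → ℝ) (κ : ι → α) : ℝ := m * ∏ i, (μ i (κ i) / m)

theorem isDiscreteMultiCoupling_productCoupling [DecidableEq ι] (t : ι → Finset α) {m : ℝ}
    (hm : m ≠ 0) {μ : ι → α → ℝ} (hμ : ∀ i, ∑ k ∈ t i, μ i k = m) :
    IsDiscreteMultiCoupling t (productCoupling m μ) μ := by
  intro i g
  have hnorm : ∀ i, ∑ k ∈ t i, μ i k / m = 1 := fun i => by rw [← sum_div, hμ, div_self hm]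
  calc ∑ κ ∈ Fintype.piFinset t, productCoupling m μ κ * g (κ i)
      = m * ∑ κ ∈ Fintype.piFinset t, (∏ i, (μ i (κ i) / m)) * g (κ i) := by
        simp only [productCoupling, mul_sum, mul_assoc]
    _ = ∑ k ∈ t i, μ i k * g k := by
        rw [sum_piFinset_prod_mul_apply t _ hnorm, mul_sum]
        exact sum_congr rfl fun k _ => by field_simp

theorem productCoupling_nonneg {m : ℝ} (hm : 0 ≤ m) {μ : ι → α → ℝ} (hμ : ∀ i k, 0 ≤ μ i k)
    (κ : ι → α) : 0 ≤ productCoupling m μ κ :=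
  mul_nonneg hm (prod_nonneg fun i _ => div_nonneg (hμ i (κ i)) hm)

theorem productCoupling_pos {m : ℝ} (hm : 0 < m) {μ : ι → α → ℝ} {κ : ι → α}
    (hκ : ∀ i, 0 < μ i (κ i)) : 0 < productCoupling m μ κ :=
  mul_pos hm (prod_pos fun i _ => div_pos (hκ i) hm)

end DiscreteMultiCoupling

section BarycenterLP

variable {d N : ℕ} (suppF : Fin N → Finset (Euc d))

theorem avgMap_mem_of_mem_piFinset {P : Fin N → Measure (Euc d)} {SF : Finset (Euc d)}
    (hSF : ↑SF = centroidSet P) (hsuppF : ∀ i, ↑(suppF i) = msupp (P i))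
    {κ : Fin N → Euc d} (hκ : κ ∈ Fintype.piFinset suppF) : avgMap d N κ ∈ SF := by
  rw [← mem_coe, hSF]
  exact ⟨κ, fun i => hsuppF i ▸ mem_coe.2 (Fintype.mem_piFinset.1 hκ i), rfl⟩

theorem avgMap_update_injective (hN : N ≠ 0) (κ : Fin N → Euc d) (i : Fin N) :
    Function.Injective fun a => avgMap d N (Function.update κ i a) := by
  intro a b hab
  have hsum := smul_right_injective (Euc d) (inv_ne_zero (Nat.cast_ne_zero.2 hN)) hab
  simp only [sum_update_of_mem (mem_univ i)] at hsum
  exact add_right_cancel hsum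

/-- The mass at the barycenter point `j` is replaced by the multi-coupling `q`, each tuple `κ` of
which is sent to its centroid `avgMap d N κ`. -/
def rerouteY (y : Fin N → Euc d → Euc d → ℝ) (j : Euc d) (q : (Fin N → Euc d) → ℝ) :
    Fin N → Euc d → Euc d → ℝ := fun i j' k =>
  y i j' k - (if j' = j then y i j k else 0)
    + ∑ κ ∈ Fintype.piFinset suppF with avgMap d N κ = j' ∧ κ i = k, q κ

def rerouteZ (z : Euc d → ℝ) (j : Euc d) (q : (Fin N → Euc d) → ℝ) : Euc d → ℝ := fun j' =>
  z j' - (if j' = j then z j else 0) + ∑ κ ∈ Fintype.piFinset suppF with avgMap d N κ = j', q κ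

variable {P : Fin N → Measure (Euc d)} {SF : Finset (Euc d)} {suppF}
  {y : Fin N → Euc d → Euc d → ℝ} {z : Euc d → ℝ} {j : Euc d} {q : (Fin N → Euc d) → ℝ}

theorem sum_fiberwise_avgMap (havgMap : ∀ κ ∈ Fintype.piFinset suppF, avgMap d N κ ∈ SF)
    (i : Fin N) (k : Euc d) :
    ∑ j' ∈ SF, ∑ κ ∈ Fintype.piFinset suppF with avgMap d N κ = j' ∧ κ i = k, q κ
      = ∑ κ ∈ Fintype.piFinset suppF with κ i = k, q κ := by
  simp_rw [and_comm (a := avgMap d N _ = _)]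
  exact sum_fiberwise_and_of_maps_to _ havgMap q

theorem sum_fiberwise_apply (i : Fin N) (j' : Euc d) (f : (Fin N → Euc d) → ℝ) :
    ∑ k ∈ suppF i, ∑ κ ∈ Fintype.piFinset suppF with avgMap d N κ = j' ∧ κ i = k, f κ
      = ∑ κ ∈ Fintype.piFinset suppF with avgMap d N κ = j', f κ :=
  sum_fiberwise_and_of_maps_to _ (fun _ hκ => Fintype.mem_piFinset.1 hκ i) f

theorem LPFeasible.reroute (h : LPFeasible P SF suppF y z) (hj : j ∈ SF)
    (havgMap : ∀ κ ∈ Fintype.piFinset suppF, avgMap d N κ ∈ SF) (hq₀ : ∀ κ, 0 ≤ q κ)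
    (hq : IsDiscreteMultiCoupling suppF q fun i => y i j) :
    LPFeasible P SF suppF (rerouteY suppF y j q) (rerouteZ suppF z j q) := by
  obtain ⟨hy₀, hz₀, hrow, hcol⟩ := h
  have hfiber₀ : ∀ s : Finset (Fin N → Euc d), 0 ≤ ∑ κ ∈ s, q κ :=
    fun _ => sum_nonneg fun κ _ => hq₀ κ
  refine ⟨fun i j' k => ?_, fun j' => ?_, fun i j' hj' => ?_, fun i k hk => ?_⟩
  · by_cases hjj : j' = j
    · simp [rerouteY, hjj, hfiber₀]
    · simpa [rerouteY, hjj] using add_nonneg (hy₀ i j' k) (hfiber₀ _)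
  · by_cases hjj : j' = j
    · simp [rerouteZ, hjj, hfiber₀]
    · simpa [rerouteZ, hjj] using add_nonneg (hz₀ j') (hfiber₀ _)
  · simp only [rerouteY, rerouteZ, sum_add_distrib, sum_sub_distrib, hrow i j' hj',
      sum_fiberwise_apply, sum_ite_irrel, sum_const_zero, hrow i j hj]
  · simp only [rerouteY, sum_add_distrib, sum_sub_distrib, hcol i k hk,
      sum_fiberwise_avgMap havgMap, hq.sum_filter_apply_eq i hk, sum_ite_eq', hj, if_true]
    ring

theorem LPcost_rerouteY (hj : j ∈ SF) (havgMap : ∀ κ ∈ Fintype.piFinset suppF, avgMap d N κ ∈ SF)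
    (hq : IsDiscreteMultiCoupling suppF q fun i => y i j) :
    LPcost SF suppF (rerouteY suppF y j q)
      = LPcost SF suppF y - N * ∑ κ ∈ Fintype.piFinset suppF, q κ * ‖j - avgMap d N κ‖ ^ 2 := by
  have hremoved : ∀ i, ∑ j' ∈ SF, ∑ k ∈ suppF i, ‖j' - k‖ ^ 2 * (if j' = j then y i j k else 0)
      = ∑ κ ∈ Fintype.piFinset suppF, q κ * ‖j - κ i‖ ^ 2 := by
    intro i
    simp only [mul_ite, mul_zero, sum_comm (s := SF), sum_ite_eq', hj, if_true]
    rw [hq i fun k => ‖j - k‖ ^ 2]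
    exact sum_congr rfl fun k _ => mul_comm _ _
  have hadded : ∀ i, ∑ j' ∈ SF, ∑ k ∈ suppF i, ‖j' - k‖ ^ 2 *
        ∑ κ ∈ Fintype.piFinset suppF with avgMap d N κ = j' ∧ κ i = k, q κ
      = ∑ κ ∈ Fintype.piFinset suppF, q κ * ‖avgMap d N κ - κ i‖ ^ 2 := by
    intro i
    calc ∑ j' ∈ SF, ∑ k ∈ suppF i, ‖j' - k‖ ^ 2 *
          ∑ κ ∈ Fintype.piFinset suppF with avgMap d N κ = j' ∧ κ i = k, q κ
        = ∑ j' ∈ SF, ∑ k ∈ suppF i,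
          ∑ κ ∈ Fintype.piFinset suppF with avgMap d N κ = j' ∧ κ i = k,
            q κ * ‖avgMap d N κ - κ i‖ ^ 2 := by
          refine sum_congr rfl fun j' _ => sum_congr rfl fun k _ => ?_
          rw [mul_sum]
          refine sum_congr rfl fun κ hκ => ?_
          obtain ⟨rfl, rfl⟩ := (mem_filter.1 hκ).2
          ring
      _ = _ := by simp only [sum_fiberwise_apply, sum_fiberwise_of_maps_to havgMap]
  have hcentroid : ∀ κ : Fin N → Euc d,
      ∑ i, ‖avgMap d N κ - κ i‖ ^ 2 - ∑ i, ‖j - κ i‖ ^ 2 = -(N * ‖j - avgMap d N κ‖ ^ 2) := by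
    intro κ
    have := sum_norm_sub_sq_eq_sum_norm_centroid_sub_sq_add κ j
    simp only [Fintype.card_fin] at this
    rw [this, avgMap]
    ring
  calc LPcost SF suppF (rerouteY suppF y j q)
      = LPcost SF suppF y - ∑ i, ∑ κ ∈ Fintype.piFinset suppF, q κ * ‖j - κ i‖ ^ 2
          + ∑ i, ∑ κ ∈ Fintype.piFinset suppF, q κ * ‖avgMap d N κ - κ i‖ ^ 2 := by
        simp only [LPcost, rerouteY, mul_add, mul_sub, sum_add_distrib, sum_sub_distrib,
          hremoved, hadded]
    _ = LPcost SF suppF y + ∑ κ ∈ Fintype.piFinset suppF,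
          q κ * (∑ i, ‖avgMap d N κ - κ i‖ ^ 2 - ∑ i, ‖j - κ i‖ ^ 2) := by
        simp only [mul_sub, mul_sum, sum_sub_distrib, sum_comm (s := univ)]
        ring
    _ = _ := by
        simp only [hcentroid, mul_neg, sum_neg_distrib, mul_sum, mul_left_comm]
        ring

theorem LPFeasible.exists_pos (h : LPFeasible P SF suppF y z) (hj : j ∈ SF) (hzj : 0 < z j)
    (i : Fin N) : ∃ k ∈ suppF i, 0 < y i j k :=
  exists_lt_of_sum_lt <| by rwa [sum_const_zero, h.2.2.1 i j hj]

theorem LPOptimal.avgMap_eq (hopt : LPOptimal P SF suppF y z) (hN : N ≠ 0)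
    (havgMap : ∀ κ ∈ Fintype.piFinset suppF, avgMap d N κ ∈ SF) (hj : j ∈ SF) (hzj : 0 < z j)
    {κ : Fin N → Euc d} (hκ : κ ∈ Fintype.piFinset suppF) (hpos : ∀ i, 0 < y i j (κ i)) :
    avgMap d N κ = j := by
  obtain ⟨hfeas, hmin⟩ := hopt
  set q := productCoupling (z j) fun i => y i j
  have hq₀ : ∀ κ, 0 ≤ q κ := productCoupling_nonneg hzj.le fun i k => hfeas.1 i j k
  have hq : IsDiscreteMultiCoupling suppF q fun i => y i j :=
    isDiscreteMultiCoupling_productCoupling suppF hzj.ne' fun i => hfeas.2.2.1 i j hj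
  have hle := hmin _ _ (hfeas.reroute hj havgMap hq₀ hq)
  rw [LPcost_rerouteY hj havgMap hq] at hle
  have hzero : ∑ κ ∈ Fintype.piFinset suppF, q κ * ‖j - avgMap d N κ‖ ^ 2 = 0 := by
    refine le_antisymm (le_of_mul_le_mul_left ?_ (Nat.cast_pos.2 (Nat.pos_of_ne_zero hN)))
      (sum_nonneg fun κ _ => mul_nonneg (hq₀ κ) (sq_nonneg _))
    linarith
  have hκ_zero := (sum_eq_zero_iff_of_nonneg fun κ _ =>
    mul_nonneg (hq₀ κ) (sq_nonneg _)).1 hzero κ hκ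
  rw [mul_eq_zero, or_iff_right (productCoupling_pos hzj hpos).ne', sq_eq_zero_iff, norm_eq_zero,
    sub_eq_zero] at hκ_zero
  exact hκ_zero.symm

end BarycenterLP

theorem stmt7_general {d N : ℕ} (P : Fin N → MeasureTheory.Measure (Euc d))
    (SF : Finset (Euc d)) (hSF : ↑SF = centroidSet P)
    (suppF : Fin N → Finset (Euc d)) (hsuppF : ∀ i, ↑(suppF i) = msupp (P i))
    (y : Fin N → Euc d → Euc d → ℝ) (z : Euc d → ℝ)
    (hopt : LPOptimal P SF suppF y z)
    (j : Euc d) (hj : j ∈ SF) (hzj : 0 < z j) (i : Fin N) :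
    ((suppF i).filter (fun k => 0 < y i j k)).card = 1 := by
  have hN : N ≠ 0 := i.pos.ne'
  have havgMap : ∀ κ ∈ Fintype.piFinset suppF, avgMap d N κ ∈ SF :=
    fun κ hκ => avgMap_mem_of_mem_piFinset suppF hSF hsuppF hκ
  choose κ hκ hpos using hopt.1.exists_pos hj hzj
  have hκ_mem : κ ∈ Fintype.piFinset suppF := Fintype.mem_piFinset.2 hκ
  refine card_eq_one.2 ⟨κ i, eq_singleton_iff_unique_mem.2 ⟨mem_filter.2 ⟨hκ i, hpos i⟩,
    fun k hk => ?_⟩⟩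
  obtain ⟨hk, hk_pos⟩ := mem_filter.1 hk
  have hκk_mem : Function.update κ i k ∈ Fintype.piFinset suppF :=
    Fintype.mem_piFinset.2 <|
      (Function.forall_update_iff κ fun i' a => a ∈ suppF i').2 ⟨hk, fun i' _ => hκ i'⟩
  have hκk_pos : ∀ i', 0 < y i' j (Function.update κ i k i') :=
    (Function.forall_update_iff κ fun i' a => 0 < y i' j a).2 ⟨hk_pos, fun i' _ => hpos i'⟩
  apply avgMap_update_injective hN κ i
  simp only [Function.update_eq_self]
  rw [hopt.avgMap_eq hN havgMap hj hzj hκk_mem hκk_pos,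
    hopt.avgMap_eq hN havgMap hj hzj hκ_mem hpos]

/-- for an optimal solution `(y*, z*)` of the barycenter LP, every `x_j ∈ S`
with `z*_j > 0` and every `i` admit exactly one support point `k` of `Pᵢ` with
`y*_{i j k} > 0` (no mass-splitting). -/
theorem stmt7 {d N : ℕ} (P : Fin N → MeasureTheory.Measure (Euc d))
    (hP : ∀ i, IsDiscreteProb (P i))
    (SF : Finset (Euc d)) (hSF : ↑SF = centroidSet P)
    (suppF : Fin N → Finset (Euc d)) (hsuppF : ∀ i, ↑(suppF i) = msupp (P i))
    (y : Fin N → Euc d → Euc d → ℝ) (z : Euc d → ℝ)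
    (hopt : LPOptimal P SF suppF y z)
    (j : Euc d) (hj : j ∈ SF) (hzj : 0 < z j) (i : Fin N) :
    ((suppF i).filter (fun k => 0 < y i j k)).card = 1 :=
  stmt7_general P SF hSF suppF hsuppF y z hopt j hj hzj i
end
end

section
/- Let 𝒮 be as above with 𝒯(𝒮) ≠ ∅, and let w ∈ 𝒯(𝒮). Then there exists an N-star transport y between P(w,𝒮) and P₁,…,P_N with c(y) = c(w,𝒮). -/
/-!
Push the weights `w` of the scheme forward along `h ↦ (q_{h0}, q_{hi})`, separately for each `i`:
`y_{ijk}` is the total weight of the tuples with centroid `x_j` and `i`-th entry `x_{ik}`.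
Summing over `k` recovers the mass of `P(w, 𝒮)` at `x_j`, summing over `j` recovers the
marginal constraint of `𝒯(𝒮)`, and the cost regroups the sum defining `c(w, 𝒮)` by fibres.
-/

open MeasureTheory ENNReal

noncomputable section

open scoped Classical

/-- The location-fixed transportation scheme `𝒯(𝒮)` for the ordered tuple family
`s_h = (q0 h, q h 1, …, q h N)`: nonnegative weights `w` such that for each `i` and each
support point `k` of `Pᵢ`, the total weight of tuples whose `i`-th entry is `k` equals the
mass `Pᵢ({k})`. -/
def schemeT {d N m : ℕ} (P : Fin N → MeasureTheory.Measure (Euc d))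
    (suppF : Fin N → Finset (Euc d))
    (q0 : Fin m → Euc d) (q : Fin m → Fin N → Euc d) : Set (Fin m → ℝ) :=
  {w | (∀ h, 0 ≤ w h) ∧
    ∀ i, ∀ k ∈ suppF i,
      ∑ h ∈ Finset.univ.filter (fun h => q h i = k), w h = (P i {k}).toReal}

/-- The measure `P(w, 𝒮) = Σ_h w_h δ_{q_{h0}}` associated with a weight vector `w`. -/
def schemeMeasure {d m : ℕ} (q0 : Fin m → Euc d) (w : Fin m → ℝ) :
    MeasureTheory.Measure (Euc d) :=
  ∑ h, ENNReal.ofReal (w h) • MeasureTheory.Measure.dirac (q0 h)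

/-- The cost `c(w, 𝒮) = Σ_h w_h Σᵢ ‖q_{h0} - q_{hi}‖²`. -/
def schemeCost {d N m : ℕ} (q0 : Fin m → Euc d) (q : Fin m → Fin N → Euc d)
    (w : Fin m → ℝ) : ℝ :=
  ∑ h, w h * ∑ i, ‖q0 h - q h i‖ ^ 2

/-- An `N`-star transport between a measure `Q` (supported in the finite set `JF`, with mass
`Q({j})` at `j`) and `P₁, …, P_N`: nonnegative `y i j k` with row sums `Σ_k y i j k = Q({j})`
and column sums `Σ_j y i j k = Pᵢ({k})`. -/
def IsNStar {d N : ℕ} (P : Fin N → MeasureTheory.Measure (Euc d))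
    (suppF : Fin N → Finset (Euc d)) (Q : MeasureTheory.Measure (Euc d))
    (JF : Finset (Euc d)) (y : Fin N → Euc d → Euc d → ℝ) : Prop :=
  (∀ i j k, 0 ≤ y i j k) ∧
  (∀ i, ∀ j ∈ JF, ∑ k ∈ suppF i, y i j k = (Q {j}).toReal) ∧
  (∀ i, ∀ k ∈ suppF i, ∑ j ∈ JF, y i j k = (P i {k}).toReal)

/-- The cost `c(y) = Σ_{i,j,k} ‖x_j - x_{ik}‖² y_{ijk}` of an `N`-star transport. -/
def nstarCost {d N : ℕ} (JF : Finset (Euc d)) (suppF : Fin N → Finset (Euc d))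
    (y : Fin N → Euc d → Euc d → ℝ) : ℝ :=
  ∑ i, ∑ j ∈ JF, ∑ k ∈ suppF i, ‖j - k‖ ^ 2 * y i j k

namespace Finset

variable {ι α β M : Type*} [DecidableEq α] [DecidableEq β] [AddCommMonoid M] {s : Finset ι}
  {f : ι → α} {g : ι → β}

theorem sum_sum_filter_and_eq_left {t : Finset β} (hg : ∀ h ∈ s, g h ∈ t) (a : α) (F : ι → M) :
    ∑ b ∈ t, ∑ h ∈ s with f h = a ∧ g h = b, F h = ∑ h ∈ s with f h = a, F h := by
  rw [← sum_fiberwise_of_maps_to (g := g) (t := t) (fun h hh => hg h (mem_filter.1 hh).1)]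
  simp only [filter_filter]

theorem sum_sum_filter_and_eq_right {u : Finset α} (hf : ∀ h ∈ s, f h ∈ u) (b : β) (F : ι → M) :
    ∑ a ∈ u, ∑ h ∈ s with f h = a ∧ g h = b, F h = ∑ h ∈ s with g h = b, F h := by
  simp only [and_comm (a := f _ = _)]
  exact sum_sum_filter_and_eq_left hf b F

theorem sum_sum_mul_sum_filter_and {R : Type*} [NonUnitalNonAssocSemiring R] {u : Finset α}
    {t : Finset β} (hf : ∀ h ∈ s, f h ∈ u) (hg : ∀ h ∈ s, g h ∈ t) (c : α → β → R)
    (w : ι → R) :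
    ∑ a ∈ u, ∑ b ∈ t, c a b * ∑ h ∈ s with f h = a ∧ g h = b, w h
      = ∑ h ∈ s, c (f h) (g h) * w h := by
  have hfibre : ∀ a b, c a b * ∑ h ∈ s with f h = a ∧ g h = b, w h
      = ∑ h ∈ s with f h = a ∧ g h = b, c (f h) (g h) * w h := fun a b => by
    rw [mul_sum]
    refine sum_congr rfl fun h hh => ?_
    obtain ⟨rfl, rfl⟩ := (mem_filter.1 hh).2
    rfl
  simp only [hfibre, sum_sum_filter_and_eq_left hg]
  exact sum_fiberwise_of_maps_to hf _

end Finset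

theorem MeasureTheory.Measure.toReal_sum_ofReal_smul_dirac_singleton {α ι : Type*} [MeasurableSpace α]
    [MeasurableSingletonClass α] [DecidableEq α] (s : Finset ι) (x : ι → α) {w : ι → ℝ}
    (hw : ∀ h ∈ s, 0 ≤ w h) (a : α) :
    ((∑ h ∈ s, ENNReal.ofReal (w h) • Measure.dirac (x h)) {a}).toReal
      = ∑ h ∈ s with x h = a, w h := by
  rw [Measure.finsetSum_apply, ENNReal.toReal_sum, Finset.sum_filter]
  · refine Finset.sum_congr rfl fun h hh => ?_
    by_cases hx : x h = a <;> simp [hx, hw h hh]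
  · intro h _
    by_cases hx : x h = a <;> simp [hx]

theorem stmt10_general {d N m : ℕ} (P : Fin N → MeasureTheory.Measure (Euc d))
    (suppF : Fin N → Finset (Euc d)) (hsuppF : ∀ i, ↑(suppF i) = msupp (P i))
    (q0 : Fin m → Euc d) (q : Fin m → Fin N → Euc d)
    (hq : ∀ h i, q h i ∈ msupp (P i))
    (w : Fin m → ℝ) (hw : w ∈ schemeT P suppF q0 q) :
    ∃ y : Fin N → Euc d → Euc d → ℝ,
      IsNStar P suppF (schemeMeasure q0 w) (Finset.univ.image q0) y ∧
      nstarCost (Finset.univ.image q0) suppF y = schemeCost q0 q w := by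
  obtain ⟨hw_nonneg, hw_marginal⟩ := hw
  have hq_mem : ∀ i, ∀ h ∈ Finset.univ, q h i ∈ suppF i := fun i h _ => by
    rw [← Finset.mem_coe, hsuppF i]
    exact hq h i
  have hq0_mem : ∀ h ∈ Finset.univ, q0 h ∈ Finset.univ.image q0 := fun h _ =>
    Finset.mem_image_of_mem q0 (Finset.mem_univ h)
  refine ⟨fun i j k => ∑ h with q0 h = j ∧ q h i = k, w h,
    ⟨fun i j k => Finset.sum_nonneg fun h _ => hw_nonneg h, fun i j _ => ?_,
      fun i k hk => ?_⟩, ?_⟩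
  · rw [schemeMeasure, Measure.toReal_sum_ofReal_smul_dirac_singleton _ _
      (fun h _ => hw_nonneg h)]
    exact Finset.sum_sum_filter_and_eq_left (hq_mem i) j w
  · rw [← hw_marginal i k hk]
    exact Finset.sum_sum_filter_and_eq_right hq0_mem k w
  · calc nstarCost (Finset.univ.image q0) suppF _
        = ∑ i, ∑ h, ‖q0 h - q h i‖ ^ 2 * w h := Finset.sum_congr rfl fun i _ =>
          Finset.sum_sum_mul_sum_filter_and hq0_mem (hq_mem i) (fun j k => ‖j - k‖ ^ 2) w
      _ = schemeCost q0 q w := by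
          rw [schemeCost, Finset.sum_comm]
          simp only [Finset.mul_sum, mul_comm]

/-- for any `w ∈ 𝒯(𝒮)` there exists an `N`-star transport `y` between
`P(w, 𝒮)` and `P₁, …, P_N` whose cost equals `c(w, 𝒮)`. -/
theorem stmt10 {d N m : ℕ} (P : Fin N → MeasureTheory.Measure (Euc d))
    (hP : ∀ i, IsDiscreteProb (P i))
    (suppF : Fin N → Finset (Euc d)) (hsuppF : ∀ i, ↑(suppF i) = msupp (P i))
    (q0 : Fin m → Euc d) (q : Fin m → Fin N → Euc d)
    (hq0 : ∀ h, q0 h ∈ centroidSet P) (hq : ∀ h i, q h i ∈ msupp (P i))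
    (w : Fin m → ℝ) (hw : w ∈ schemeT P suppF q0 q) :
    ∃ y : Fin N → Euc d → Euc d → ℝ,
      IsNStar P suppF (schemeMeasure q0 w) (Finset.univ.image q0) y ∧
      nstarCost (Finset.univ.image q0) suppF y = schemeCost q0 q w :=
  stmt10_general P suppF hsuppF q0 q hq w hw
end
end

section
/- Let P be a discrete probability measure supported in S and let y be an N-star transport between P and P₁,…,P_N. Then there exist a finite ordered set 𝒮' of tuples in S × supp(P₁) × ⋯ × supp(P_N) and a vector w ∈ 𝒯(𝒮') such that P = P(w,𝒮') and c(w,𝒮') = c(y). -/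
/-
Glue the `N` plans of the star transport conditionally independently given the centre: a centre
`j` of mass `c = Q({j})` is sent to the tuple `v = (v₁, …, v_N)` with weight
`c ∏ᵢ y i j vᵢ / c`. Summing out all coordinates but the `i`-th recovers `y i j`, so this weight
vector lies in the scheme, pushes forward to `Q` on the centres, and has the star transport's cost.
-/

open MeasureTheory ENNReal

noncomputable section

open scoped Classical

open Finset

section CondProdWeight

variable {ι α : Type*} [Fintype ι]

/-- The weight of the tuple `v` when a mass `c` is split independently along the rows `r i`
(each of total mass `c`); it vanishes when `c = 0`. -/
def condProdWeight (c : ℝ) (r : ι → α → ℝ) (v : ι → α) : ℝ :=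
  c * ∏ i, (r i (v i) / c)

lemma condProdWeight_nonneg {c : ℝ} {r : ι → α → ℝ} (hc : 0 ≤ c) (hr : ∀ i k, 0 ≤ r i k)
    (v : ι → α) : 0 ≤ condProdWeight c r v :=
  mul_nonneg hc (prod_nonneg fun i _ => div_nonneg (hr i (v i)) hc)

variable [DecidableEq ι] {S : ι → Finset α} {c : ℝ} {r : ι → α → ℝ}

lemma sum_piFinset_condProdWeight (hr : ∀ i, ∑ k ∈ S i, r i k = c) :
    ∑ v ∈ Fintype.piFinset S, condProdWeight c r v = c := by
  rcases eq_or_ne c 0 with rfl | hc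
  · simp [condProdWeight]
  · simp only [condProdWeight]
    rw [← mul_sum, ← prod_univ_sum S fun i k => r i k / c]
    simp only [← sum_div, hr, div_self hc, prod_const_one, mul_one]

lemma sum_piFinset_condProdWeight_mul (hr : ∀ i, ∑ k ∈ S i, r i k = c) {i₀ : ι}
    (hr₀ : ∀ k ∈ S i₀, 0 ≤ r i₀ k) (g : α → ℝ) :
    ∑ v ∈ Fintype.piFinset S, condProdWeight c r v * g (v i₀) = ∑ k ∈ S i₀, r i₀ k * g k := by
  rcases eq_or_ne c 0 with rfl | hc
  · have hzero := (sum_eq_zero_iff_of_nonneg hr₀).mp (hr i₀)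
    simpa [condProdWeight] using (sum_eq_zero fun k hk => by rw [hzero k hk, zero_mul]).symm
  calc ∑ v ∈ Fintype.piFinset S, condProdWeight c r v * g (v i₀)
      = c * ∑ v ∈ Fintype.piFinset S,
          ∏ i, (r i (v i) / c * if i = i₀ then g (v i) else 1) := by
        simp only [condProdWeight, prod_mul_distrib, prod_ite_eq', mem_univ, if_true, mul_sum,
          mul_assoc]
    _ = c * ∏ i, ∑ k ∈ S i, r i k / c * if i = i₀ then g k else 1 := by
        rw [prod_univ_sum]
    _ = c * ∑ k ∈ S i₀, r i₀ k / c * g k := by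
        rw [prod_eq_single i₀ (fun i _ hi => by simp [hi, ← sum_div, hr, hc]) (by simp)]
        simp
    _ = ∑ k ∈ S i₀, r i₀ k * g k := by
        rw [mul_sum]
        exact sum_congr rfl fun k _ => by field_simp

end CondProdWeight

lemma msupp_eq_support {d : ℕ} (μ : Measure (Euc d)) : msupp μ = μ.support := by
  ext x
  simp [msupp, Measure.mem_support_iff_forall, pos_iff_ne_zero]

lemma eq_sum_smul_dirac_of_coe_eq_msupp {d : ℕ} {μ : Measure (Euc d)} {F : Finset (Euc d)}
    (hF : ↑F = msupp μ) : μ = ∑ j ∈ F, μ {j} • Measure.dirac j :=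
  Measure.ae_mem_finset_iff.mp <| by
    have h := Measure.support_mem_ae (μ := μ)
    rwa [← msupp_eq_support, ← hF] at h

lemma Finset.sum_equivFin_symm {α M : Type*} [AddCommMonoid M] (s : Finset α) (f : α → M) :
    ∑ h : Fin s.card, f (s.equivFin.symm h) = ∑ a ∈ s, f a :=
  (Equiv.sum_comp s.equivFin.symm fun a => f a).trans (sum_coe_sort s f)

section StarGlue

variable {d N : ℕ}

def starGlue (Q : Measure (Euc d)) (y : Fin N → Euc d → Euc d → ℝ)
    (a : Euc d × (Fin N → Euc d)) : ℝ :=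
  condProdWeight (Q {a.1}).toReal (fun i => y i a.1) a.2

variable {P : Fin N → Measure (Euc d)} {suppF : Fin N → Finset (Euc d)} {Q : Measure (Euc d)}
  {QF : Finset (Euc d)} {y : Fin N → Euc d → Euc d → ℝ}

lemma IsNStar.starGlue_nonneg (hy : IsNStar P suppF Q QF y) (a : Euc d × (Fin N → Euc d)) :
    0 ≤ starGlue Q y a :=
  condProdWeight_nonneg ENNReal.toReal_nonneg (fun i => hy.1 i a.1) a.2

lemma IsNStar.sum_starGlue (hy : IsNStar P suppF Q QF y) {j : Euc d} (hj : j ∈ QF) :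
    ∑ v ∈ Fintype.piFinset suppF, starGlue Q y (j, v) = (Q {j}).toReal :=
  sum_piFinset_condProdWeight fun i => hy.2.1 i j hj

lemma IsNStar.sum_starGlue_mul (hy : IsNStar P suppF Q QF y) {j : Euc d} (hj : j ∈ QF)
    (i : Fin N) (g : Euc d → ℝ) :
    ∑ v ∈ Fintype.piFinset suppF, starGlue Q y (j, v) * g (v i)
      = ∑ k ∈ suppF i, y i j k * g k :=
  sum_piFinset_condProdWeight_mul (fun i => hy.2.1 i j hj) (fun k _ => hy.1 i j k) g

lemma IsNStar.sum_starGlue_ite (hy : IsNStar P suppF Q QF y) {i : Fin N} {k : Euc d}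
    (hk : k ∈ suppF i) :
    ∑ a ∈ QF ×ˢ Fintype.piFinset suppF, (if a.2 i = k then starGlue Q y a else 0)
      = (P i {k}).toReal := by
  rw [sum_product, ← hy.2.2 i k hk]
  refine sum_congr rfl fun j hj => ?_
  simpa [mul_ite, hk] using hy.sum_starGlue_mul hj i fun k' => if k' = k then 1 else 0

lemma IsNStar.sum_starGlue_smul_dirac [IsFiniteMeasure Q] (hy : IsNStar P suppF Q QF y)
    (hQF : ↑QF = msupp Q) :
    ∑ a ∈ QF ×ˢ Fintype.piFinset suppF, ENNReal.ofReal (starGlue Q y a) • Measure.dirac a.1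
      = Q := by
  conv_rhs => rw [eq_sum_smul_dirac_of_coe_eq_msupp hQF]
  rw [sum_product]
  refine sum_congr rfl fun j hj => ?_
  dsimp only
  rw [← sum_smul, ← ENNReal.ofReal_sum_of_nonneg fun v _ => hy.starGlue_nonneg _,
    hy.sum_starGlue hj, ENNReal.ofReal_toReal (measure_ne_top Q _)]

lemma IsNStar.sum_starGlue_mul_cost (hy : IsNStar P suppF Q QF y) :
    ∑ a ∈ QF ×ˢ Fintype.piFinset suppF, starGlue Q y a * ∑ i, ‖a.1 - a.2 i‖ ^ 2
      = nstarCost QF suppF y := by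
  rw [sum_product, nstarCost]
  conv_rhs => rw [sum_comm]
  refine sum_congr rfl fun j hj => ?_
  simp only [mul_sum]
  rw [sum_comm]
  refine sum_congr rfl fun i _ => ?_
  simpa only [mul_comm] using hy.sum_starGlue_mul hj i fun k => ‖j - k‖ ^ 2

end StarGlue

theorem stmt11_general {d N : ℕ} (P : Fin N → MeasureTheory.Measure (Euc d))
    (suppF : Fin N → Finset (Euc d)) (hsuppF : ∀ i, ↑(suppF i) = msupp (P i))
    (Q : MeasureTheory.Measure (Euc d)) (hQ : IsDiscreteProb Q)
    (hQS : msupp Q ⊆ centroidSet P)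
    (QF : Finset (Euc d)) (hQF : ↑QF = msupp Q)
    (y : Fin N → Euc d → Euc d → ℝ) (hy : IsNStar P suppF Q QF y) :
    ∃ (m : ℕ) (q0 : Fin m → Euc d) (q : Fin m → Fin N → Euc d),
      (∀ h, q0 h ∈ centroidSet P) ∧ (∀ h i, q h i ∈ msupp (P i)) ∧
      ∃ w ∈ schemeT P suppF q0 q,
        schemeMeasure q0 w = Q ∧ schemeCost q0 q w = nstarCost QF suppF y := by
  have : IsProbabilityMeasure Q := hQ.1
  set A := QF ×ˢ Fintype.piFinset suppF
  let e := A.equivFin.symm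
  have he (h : Fin A.card) : (e h).1.1 ∈ QF ∧ ∀ i, (e h).1.2 i ∈ suppF i :=
    (mem_product.mp (e h).2).imp_right Fintype.mem_piFinset.mp
  refine ⟨A.card, fun h => (e h).1.1, fun h => (e h).1.2,
    fun h => hQS (hQF ▸ (he h).1), fun h i => hsuppF i ▸ (he h).2 i,
    fun h => starGlue Q y (e h), ⟨fun h => hy.starGlue_nonneg _, fun i k hk => ?_⟩, ?_, ?_⟩
  · rw [sum_filter, A.sum_equivFin_symm fun a => if a.2 i = k then starGlue Q y a else 0]
    exact hy.sum_starGlue_ite hk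
  · rw [schemeMeasure,
      A.sum_equivFin_symm fun a => ENNReal.ofReal (starGlue Q y a) • Measure.dirac a.1]
    exact hy.sum_starGlue_smul_dirac hQF
  · rw [schemeCost, A.sum_equivFin_symm fun a => starGlue Q y a * ∑ i, ‖a.1 - a.2 i‖ ^ 2]
    exact hy.sum_starGlue_mul_cost

/-- for every discrete probability measure `Q` supported in `S` and every
`N`-star transport `y` between `Q` and `P₁, …, P_N`, there exist an ordered finite family
`𝒮'` of tuples in `S × supp(P₁) × ⋯ × supp(P_N)` and a weight vector `w ∈ 𝒯(𝒮')` such that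
`Q = P(w, 𝒮')` and `c(w, 𝒮') = c(y)`. -/
theorem stmt11 {d N : ℕ} (P : Fin N → MeasureTheory.Measure (Euc d))
    (hP : ∀ i, IsDiscreteProb (P i))
    (suppF : Fin N → Finset (Euc d)) (hsuppF : ∀ i, ↑(suppF i) = msupp (P i))
    (Q : MeasureTheory.Measure (Euc d)) (hQ : IsDiscreteProb Q)
    (hQS : msupp Q ⊆ centroidSet P)
    (QF : Finset (Euc d)) (hQF : ↑QF = msupp Q)
    (y : Fin N → Euc d → Euc d → ℝ) (hy : IsNStar P suppF Q QF y) :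
    ∃ (m : ℕ) (q0 : Fin m → Euc d) (q : Fin m → Fin N → Euc d),
      (∀ h, q0 h ∈ centroidSet P) ∧ (∀ h i, q h i ∈ msupp (P i)) ∧
      ∃ w ∈ schemeT P suppF q0 q,
        schemeMeasure q0 w = Q ∧ schemeCost q0 q w = nstarCost QF suppF y :=
  stmt11_general P suppF hsuppF Q hQ hQS QF hQF y hy
end
end

section
/- Let 𝒮 be a finite ordered set of tuples in S × supp(P₁) × ⋯ × supp(P_N) with 𝒯(𝒮) ≠ ∅, and set Sᵢ = |supp(Pᵢ)|. Then there exists w* ∈ 𝒯(𝒮) minimizing c(·,𝒮) over 𝒯(𝒮) such that |{h : w*_h > 0}| ≤ Σᵢ₌₁ᴺ Sᵢ − N + 1. -/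
open MeasureTheory ENNReal

noncomputable section

open scoped Classical

/-!
A location-fixed scheme is a standard-form polyhedron `{w ≥ 0 | r_j w = b_j}` with one row
`r_{ik} w = Σ_{h : q_{hi} = x_{ik}} w_h` per support point, and `c(·, 𝒮)` is linear, so this is
the basic-solution theorem of linear programming. The polyhedron is compact, so a minimizer
exists; take one with fewest positive entries. If its support were larger than the rank of the
rows, some direction `z ≠ 0` supported there would be annihilated by every row. Since `w ± t z`
stays feasible for small `t`, minimality forces `c z = 0`, and moving along `z` until an entry
vanishes gives a minimizer with smaller support. Finally, for each `i` the rows `r_{ik}` sum to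
the total-mass functional, so the rank is at most `Σᵢ Sᵢ − N + 1`.
-/

open Module Finset Filter Topology

section StandardForm

variable {ι J : Type*}

def standardFormPolyhedron (r : J → Dual ℝ (ι → ℝ)) (b : J → ℝ) : Set (ι → ℝ) :=
  {w | (∀ h, 0 ≤ w h) ∧ ∀ j, r j w = b j}

variable {r : J → Dual ℝ (ι → ℝ)} {b : J → ℝ}

lemma isClosed_standardFormPolyhedron [Fintype ι] : IsClosed (standardFormPolyhedron r b) := by
  simp only [standardFormPolyhedron, Set.ofPred_and, Set.ofPred_forall]
  exact (isClosed_iInter fun h => isClosed_le continuous_const (continuous_apply h)).inter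
    (isClosed_iInter fun j =>
      isClosed_eq (LinearMap.continuous_of_finiteDimensional (r j)) continuous_const)

lemma exists_isMinOn_of_isBounded [Fintype ι] (c : Dual ℝ (ι → ℝ))
    (hne : (standardFormPolyhedron r b).Nonempty)
    (hbdd : Bornology.IsBounded (standardFormPolyhedron r b)) :
    ∃ w ∈ standardFormPolyhedron r b, IsMinOn c (standardFormPolyhedron r b) w :=
  (Metric.isCompact_of_isClosed_isBounded isClosed_standardFormPolyhedron hbdd).exists_isMinOn
    hne (LinearMap.continuous_of_finiteDimensional c).continuousOn

lemma add_smul_mem_standardFormPolyhedron {w z : ι → ℝ} (hw : w ∈ standardFormPolyhedron r b)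
    (hz : ∀ j, r j z = 0) {t : ℝ} (hnn : ∀ h, 0 ≤ w h + t * z h) :
    w + t • z ∈ standardFormPolyhedron r b :=
  ⟨hnn, fun j => by simp [hw.2 j, hz j]⟩

lemma exists_annihilated_of_finrank_range_lt [Fintype ι] (K : Finset ι)
    (hK : (Set.range r).finrank ℝ < #K) :
    ∃ z : ι → ℝ, (∀ h ∉ K, z h = 0) ∧ (∀ j, r j z = 0) ∧ ∃ h, z h < 0 := by
  set R := Submodule.span ℝ (Set.range r)
  -- a vector in the kernel of `Φ` vanishes off `K` and is annihilated by every row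
  let Φ : (ι → ℝ) →ₗ[ℝ] ({h // h ∉ K} → ℝ) × Dual ℝ R :=
    (LinearMap.funLeft ℝ ℝ Subtype.val).prod (R.subtype.dualMap ∘ₗ Dual.eval ℝ _)
  have hdim : finrank ℝ (({h // h ∉ K} → ℝ) × Dual ℝ R) < finrank ℝ (ι → ℝ) := by
    have : Fintype.card {h // h ∉ K} = Fintype.card ι - #K := by
      simp [Fintype.card_subtype_compl]
    have := K.card_le_univ
    change finrank ℝ R < #K at hK
    rw [finrank_prod, finrank_fintype_fun_eq_card, finrank_fintype_fun_eq_card,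
      Subspace.dual_finrank_eq (K := ℝ) (V := R)]
    omega
  obtain ⟨z, hzΦ, hz⟩ :=
    (Submodule.ne_bot_iff _).mp (LinearMap.ker_ne_bot_of_finrank_lt (f := Φ) hdim)
  obtain ⟨hzoff, hzR⟩ := Prod.ext_iff.mp (LinearMap.mem_ker.mp hzΦ)
  have hzK : ∀ h ∉ K, z h = 0 := fun h hh => congr_fun hzoff ⟨h, hh⟩
  have hzr : ∀ j, r j z = 0 := fun j =>
    LinearMap.congr_fun hzR ⟨r j, Submodule.subset_span ⟨j, rfl⟩⟩
  obtain ⟨h, hh⟩ := Function.ne_iff.mp hz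
  rcases hh.lt_or_gt with hneg | hpos
  · exact ⟨z, hzK, hzr, h, hneg⟩
  · exact ⟨-z, fun h' hh' => by simp [hzK h' hh'], fun j => by simp [hzr j], h,
      by simpa using hpos⟩

lemma IsMinOn.apply_eq_zero_of_forall_apply_eq_zero [Fintype ι] {c : Dual ℝ (ι → ℝ)}
    {w z : ι → ℝ} (hmin : IsMinOn c (standardFormPolyhedron r b) w)
    (hw : w ∈ standardFormPolyhedron r b) (hz : ∀ j, r j z = 0)
    (hsupp : ∀ h, z h ≠ 0 → 0 < w h) : c z = 0 := by
  have hnn : ∀ h, ∀ᶠ t in 𝓝 (0 : ℝ), 0 ≤ w h + t * z h := by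
    intro h
    by_cases hzh : z h = 0
    · simp [hzh, hw.1 h]
    · have hcont : Tendsto (fun t : ℝ => w h + t * z h) (𝓝 0) (𝓝 (w h)) := by
        simpa using ((continuous_id.mul continuous_const).const_add (w h)).tendsto (0 : ℝ)
      exact (hcont.eventually (lt_mem_nhds (hsupp h hzh))).mono fun t ht => ht.le
  have hloc : IsLocalMin (fun t : ℝ => c (w + t • z)) 0 :=
    (eventually_all.2 hnn).mono fun t ht => by
      simpa using hmin (add_smul_mem_standardFormPolyhedron hw hz ht)
  have hderiv : HasDerivAt (fun t : ℝ => c (w + t • z)) (c z) 0 := by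
    simpa using ((hasDerivAt_id (0 : ℝ)).mul_const (c z)).const_add (c w)
  exact hloc.hasDerivAt_eq_zero hderiv

lemma exists_add_mul_eq_zero_of_neg [Fintype ι] {w z : ι → ℝ} (hw : ∀ h, 0 ≤ w h)
    (hneg : ∃ h, z h < 0) :
    ∃ t : ℝ, (∀ h, 0 ≤ w h + t * z h) ∧ ∃ h₀, z h₀ < 0 ∧ w h₀ + t * z h₀ = 0 := by
  obtain ⟨h₀, hh₀, hratio⟩ := ({h | z h < 0} : Finset ι).exists_min_image
    (fun h => w h / -z h) (let ⟨h, hh⟩ := hneg; ⟨h, (mem_filter_univ _).2 hh⟩)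
  rw [mem_filter_univ] at hh₀
  have hz₀ : 0 < -z h₀ := neg_pos.2 hh₀
  refine ⟨w h₀ / -z h₀, fun h => ?_, h₀, hh₀, by field_simp [hh₀.ne]; ring⟩
  rcases lt_or_ge (z h) 0 with hzh | hzh
  · have := (le_div_iff₀ (neg_pos.2 hzh)).1 (hratio h ((mem_filter_univ _).2 hzh))
    linarith
  · exact add_nonneg (hw h) (mul_nonneg (div_nonneg (hw h₀) hz₀.le) hzh)

lemma exists_isMinOn_card_lt [Fintype ι] {c : Dual ℝ (ι → ℝ)} {w : ι → ℝ}
    (hw : w ∈ standardFormPolyhedron r b) (hmin : IsMinOn c (standardFormPolyhedron r b) w)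
    (hK : (Set.range r).finrank ℝ < #{h | 0 < w h}) :
    ∃ w' ∈ standardFormPolyhedron r b, IsMinOn c (standardFormPolyhedron r b) w' ∧
      #{h | 0 < w' h} < #{h | 0 < w h} := by
  obtain ⟨z, hzK, hzr, hneg⟩ := exists_annihilated_of_finrank_range_lt _ hK
  have hsupp : ∀ h, z h ≠ 0 → 0 < w h := fun h hzh => by
    by_contra hwh
    exact hzh (hzK h (by simpa using hwh))
  have hcz := hmin.apply_eq_zero_of_forall_apply_eq_zero hw hzr hsupp
  obtain ⟨t, hnn, h₀, hzh₀, hh₀⟩ := exists_add_mul_eq_zero_of_neg hw.1 hneg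
  refine ⟨w + t • z, add_smul_mem_standardFormPolyhedron hw hzr hnn,
    fun w' hw' => by simpa [hcz] using hmin hw', card_lt_card ?_⟩
  rw [ssubset_iff_of_subset]
  · exact ⟨h₀, by simpa using hsupp h₀ hzh₀.ne, by simp [hh₀]⟩
  · intro h
    simp only [mem_filter_univ, Pi.add_apply, Pi.smul_apply, smul_eq_mul]
    intro hpos
    by_contra hwh
    simp [hzK h (by simpa using hwh), (not_lt.1 hwh).antisymm (hw.1 h)] at hpos

theorem exists_isMinOn_card_pos_le_finrank [Fintype ι] (c : Dual ℝ (ι → ℝ))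
    (hmin : ∃ w ∈ standardFormPolyhedron r b, IsMinOn c (standardFormPolyhedron r b) w) :
    ∃ w ∈ standardFormPolyhedron r b, IsMinOn c (standardFormPolyhedron r b) w ∧
      #{h | 0 < w h} ≤ (Set.range r).finrank ℝ := by
  obtain ⟨w, hw, hwmin⟩ := hmin
  induction hn : #{h | 0 < w h} using Nat.strong_induction_on generalizing w with
  | _ n ih =>
    by_cases hle : n ≤ (Set.range r).finrank ℝ
    · exact ⟨w, hw, hwmin, hn ▸ hle⟩
    · obtain ⟨w', hw', hw'min, hlt⟩ := exists_isMinOn_card_lt hw hwmin (by omega)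
      exact ih _ (hn ▸ hlt) w' hw' hw'min rfl

end StandardForm

section Fibers

variable {ι κ α : Type*} [Fintype ι]

def fiberSum (q : ι → κ → α) (i : κ) (k : α) : Dual ℝ (ι → ℝ) :=
  ∑ h with q h i = k, LinearMap.proj h

lemma fiberSum_apply (q : ι → κ → α) (i : κ) (k : α) (w : ι → ℝ) :
    fiberSum q i k w = ∑ h with q h i = k, w h := by
  simp [fiberSum]

lemma sum_fiberSum {q : ι → κ → α} {i : κ} {s : Finset α} (hq : ∀ h, q h i ∈ s) :
    ∑ k ∈ s, fiberSum q i k = ∑ h, LinearMap.proj h :=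
  LinearMap.ext fun w => by
    simpa [fiberSum_apply] using sum_fiberwise_of_maps_to (fun h _ => hq h) w

lemma finrank_range_fiberSum_le [Fintype κ] {q : ι → κ → α} (s : κ → Finset α)
    (hq : ∀ h i, q h i ∈ s i) :
    (Set.range fun j : (i : κ) × s i => fiberSum q j.1 j.2).finrank ℝ
      ≤ ∑ i, #(s i) - Fintype.card κ + 1 := by
  rcases isEmpty_or_nonempty ι with hι | ⟨⟨h₀⟩⟩
  · exact (Submodule.finrank_le _).trans (by simp)
  set T : Finset (Dual ℝ (ι → ℝ)) := insert (∑ h, LinearMap.proj h)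
    ((univ.sigma fun i => (s i).erase (q h₀ i)).image fun j => fiberSum q j.1 j.2)
  have hspan : Submodule.span ℝ (Set.range fun j : (i : κ) × s i => fiberSum q j.1 j.2)
      ≤ Submodule.span ℝ T := by
    rw [Submodule.span_le]
    rintro _ ⟨⟨i, k, hk⟩, rfl⟩
    have hmem : ∀ k ∈ (s i).erase (q h₀ i), fiberSum q i k ∈ Submodule.span ℝ (T : Set _) :=
      fun k hk => Submodule.subset_span
        (mem_insert_of_mem (mem_image.2 ⟨⟨i, k⟩, mem_sigma.2 ⟨mem_univ i, hk⟩, rfl⟩))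
    by_cases hk₀ : k = q h₀ i
    · subst hk₀
      have hsum := sum_fiberSum (s := s i) fun h => hq h i
      rw [← add_sum_erase _ _ hk, ← eq_sub_iff_add_eq] at hsum
      change fiberSum q i (q h₀ i) ∈ Submodule.span ℝ (T : Set _)
      rw [hsum]
      exact Submodule.sub_mem _ (Submodule.subset_span (mem_insert_self _ _))
        (Submodule.sum_mem _ hmem)
    · exact hmem k (mem_erase.2 ⟨hk₀, hk⟩)
  calc _ ≤ (T : Set (Dual ℝ (ι → ℝ))).finrank ℝ := Submodule.finrank_mono hspan
    _ ≤ #T := finrank_span_finset_le_card T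
    _ ≤ ∑ i, (#(s i) - 1) + 1 := by
      refine (card_insert_le _ _).trans (Nat.add_le_add_right (card_image_le.trans ?_) 1)
      simp [card_erase_of_mem (hq h₀ _)]
    _ = ∑ i, #(s i) - Fintype.card κ + 1 := by
      rw [sum_tsub_distrib _ fun i _ => card_pos.2 ⟨_, hq h₀ i⟩]
      simp

end Fibers

section Scheme

variable {d N m : ℕ} {P : Fin N → Measure (Euc d)} {suppF : Fin N → Finset (Euc d)}
  {q0 : Fin m → Euc d} {q : Fin m → Fin N → Euc d}

lemma schemeT_eq_standardFormPolyhedron :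
    schemeT P suppF q0 q = standardFormPolyhedron
      (fun j : (i : Fin N) × suppF i => fiberSum q j.1 j.2) (fun j => (P j.1 {j.2.1}).toReal) := by
  ext w
  simp [schemeT, standardFormPolyhedron, fiberSum_apply, Sigma.forall]

lemma schemeT_subset_Icc [∀ i, IsProbabilityMeasure (P i)] (hq : ∀ h i, q h i ∈ suppF i)
    (i : Fin N) : schemeT P suppF q0 q ⊆ Set.Icc 0 1 := by
  intro w ⟨hnn, hsum⟩
  refine ⟨hnn, fun h => ?_⟩
  calc w h ≤ ∑ h' with q h' i = q h i, w h' :=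
        single_le_sum (fun h' _ => hnn h') ((mem_filter_univ _).2 rfl)
    _ = (P i {q h i}).toReal := hsum i _ (hq h i)
    _ ≤ 1 := measureReal_le_one

lemma coe_schemeCost :
    schemeCost q0 q = ⇑(dotProductEquiv ℝ (Fin m) fun h => ∑ i, ‖q0 h - q h i‖ ^ 2) := by
  ext w
  simp [schemeCost, dotProduct, mul_comm]

end Scheme

theorem stmt12_general {d N m : ℕ} (P : Fin N → MeasureTheory.Measure (Euc d))
    (hP : ∀ i, IsDiscreteProb (P i))
    (suppF : Fin N → Finset (Euc d)) (hsuppF : ∀ i, ↑(suppF i) = msupp (P i))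
    (q0 : Fin m → Euc d) (q : Fin m → Fin N → Euc d)
    (hq : ∀ h i, q h i ∈ msupp (P i))
    (hT : (schemeT P suppF q0 q).Nonempty) :
    ∃ w ∈ schemeT P suppF q0 q,
      (∀ w' ∈ schemeT P suppF q0 q, schemeCost q0 q w ≤ schemeCost q0 q w') ∧
      (Finset.univ.filter (fun h => 0 < w h)).card ≤ (∑ i, (suppF i).card) - N + 1 := by
  have := fun i => (hP i).1
  have hq' : ∀ h i, q h i ∈ suppF i := fun h i => by rw [← mem_coe, hsuppF]; exact hq h i
  have hbdd (hN : 0 < N) : Bornology.IsBounded (schemeT P suppF q0 q) :=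
    (Metric.isBounded_Icc 0 1).subset (schemeT_subset_Icc hq' ⟨0, hN⟩)
  rw [schemeT_eq_standardFormPolyhedron] at hT hbdd ⊢
  rw [coe_schemeCost]
  set F := standardFormPolyhedron _ _
  set c := dotProductEquiv ℝ (Fin m) _
  have hmin : ∃ w ∈ F, IsMinOn c F w := by
    rcases N.eq_zero_or_pos with rfl | hN
    · exact ⟨_, hT.some_mem, fun w' _ => by simp [c]⟩
    · exact exists_isMinOn_of_isBounded _ hT (hbdd hN)
  obtain ⟨w, hw, hwmin, hcard⟩ := exists_isMinOn_card_pos_le_finrank _ hmin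
  exact ⟨w, hw, isMinOn_iff.1 hwmin,
    hcard.trans (by simpa using finrank_range_fiberSum_le suppF hq')⟩

/-- if `𝒯(𝒮) ≠ ∅`, there exists a minimizer `w*` of the cost `c(·, 𝒮)` over
`𝒯(𝒮)` with at most `Σᵢ |supp(Pᵢ)| - N + 1` strictly positive entries. -/
theorem stmt12 {d N m : ℕ} (P : Fin N → MeasureTheory.Measure (Euc d))
    (hP : ∀ i, IsDiscreteProb (P i))
    (suppF : Fin N → Finset (Euc d)) (hsuppF : ∀ i, ↑(suppF i) = msupp (P i))
    (q0 : Fin m → Euc d) (q : Fin m → Fin N → Euc d)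
    (hq0 : ∀ h, q0 h ∈ centroidSet P) (hq : ∀ h i, q h i ∈ msupp (P i))
    (hT : (schemeT P suppF q0 q).Nonempty) :
    ∃ w ∈ schemeT P suppF q0 q,
      (∀ w' ∈ schemeT P suppF q0 q, schemeCost q0 q w ≤ schemeCost q0 q w') ∧
      (Finset.univ.filter (fun h => 0 < w h)).card ≤ (∑ i, (suppF i).card) - N + 1 :=
  stmt12_general P hP suppF hsuppF q0 q hq hT
end
end

section
/- Tightness of the sparsity bound: let N ≥ 1 and W ≥ 1 be natural numbers, let a₁,…,a_W ∈ ℝ^d be distinct points, let P₁ = (1/W) Σ_{j=1}^W δ_{a_j}, and for i = 2,…,N let Pᵢ = δ_{bᵢ} for points b₂,…,b_N ∈ ℝ^d. Then the measure P̄ = (1/W) Σ_{j=1}^W δ_{(a_j + b₂ + ⋯ + b_N)/N} is a barycenter of P₁,…,P_N and |supp(P̄)| = W = Σᵢ₌₁ᴺ |supp(Pᵢ)| − N + 1. -/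
open MeasureTheory ENNReal

noncomputable section

-- L1
lemma msupp_dirac {d : ℕ} (c : Euc d) : msupp (Measure.dirac c) = {c} := by
  ext x
  constructor
  · intro h
    by_contra hx
    have hx' : x ≠ c := hx
    have hU : ({c}ᶜ : Set (Euc d)) ∈ nhds x :=
      (isClosed_singleton.isOpen_compl).mem_nhds (by simpa using hx')
    exact h _ hU (by simp [Measure.dirac_apply' _ (MeasurableSet.singleton c).compl])
  · rintro rfl U hU
    have : x ∈ U := mem_of_mem_nhds hU
    simp [Measure.dirac_apply_of_mem this]

-- L2
lemma msupp_unif {d W : ℕ} (hW : 0 < W) (c : Fin W → Euc d) :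
    msupp ((W : ℝ≥0∞)⁻¹ • ∑ j, Measure.dirac (c j)) = Set.range c := by
  have hWne : (W : ℝ≥0∞)⁻¹ ≠ 0 := by simp
  ext x
  constructor
  · intro h
    by_contra hx
    have hclosed : IsClosed (Set.range c) := (Set.finite_range c).isClosed
    have hU : (Set.range c)ᶜ ∈ nhds x := hclosed.isOpen_compl.mem_nhds hx
    refine h _ hU ?_
    have hms : MeasurableSet (Set.range c)ᶜ := (Set.finite_range c).measurableSet.compl
    simp only [Measure.smul_apply, smul_eq_mul]
    have : ∀ j, Measure.dirac (c j) (Set.range c)ᶜ = 0 := by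
      intro j
      rw [Measure.dirac_apply' _ hms]
      simp [Set.indicator_of_notMem, Set.mem_range_self]
    rw [show ((∑ j, Measure.dirac (c j)) (Set.range c)ᶜ) = ∑ j, Measure.dirac (c j) (Set.range c)ᶜ from by simp [Measure.finset_sum_apply]]
    simp [this]
  · rintro ⟨j, rfl⟩ U hU
    obtain ⟨V, hVU, hVopen, hxV⟩ := mem_nhds_iff.mp hU
    have hVle : ((W : ℝ≥0∞)⁻¹ • ∑ k, Measure.dirac (c k)) V ≤
        ((W : ℝ≥0∞)⁻¹ • ∑ k, Measure.dirac (c k)) U := measure_mono hVU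
    intro h0
    have hV0 : ((W : ℝ≥0∞)⁻¹ • ∑ k, Measure.dirac (c k)) V = 0 := le_antisymm (h0 ▸ hVle) zero_le
    have : Measure.dirac (c j) V = 0 := by
      have hsum : (∑ k, Measure.dirac (c k)) V = 0 := by
        simpa [Measure.smul_apply, hWne] using hV0
      have : ∑ k, Measure.dirac (c k) V = 0 := by
        simpa [Measure.finset_sum_apply] using hsum
      exact (Finset.sum_eq_zero_iff.mp this) j (Finset.mem_univ j)
    rw [Measure.dirac_apply' _ hVopen.measurableSet] at this
    simp [Set.indicator_of_mem hxV] at this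

-- L3
lemma lintegral_unif {d W : ℕ} (c : Fin W → Euc d) (g : Euc d → ℝ≥0∞) (hg : Measurable g) :
    ∫⁻ x, g x ∂((W : ℝ≥0∞)⁻¹ • ∑ j, Measure.dirac (c j)) = (W : ℝ≥0∞)⁻¹ * ∑ j, g (c j) := by
  rw [lintegral_smul_measure, lintegral_finset_sum_measure]
  simp [lintegral_dirac' _ hg]

-- L4
lemma isProb_unif {d W : ℕ} (hW : 0 < W) (c : Fin W → Euc d) :
    IsProbabilityMeasure ((W : ℝ≥0∞)⁻¹ • ∑ j, Measure.dirac (c j)) := by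
  constructor
  have : ((W : ℝ≥0∞)⁻¹ • ∑ j, Measure.dirac (c j)) Set.univ
      = (W : ℝ≥0∞)⁻¹ * ∑ j, Measure.dirac (c j) Set.univ := by
    simp [Measure.smul_apply, Measure.finset_sum_apply]
  rw [this]
  simp [ENNReal.inv_mul_cancel (by exact_mod_cast hW.ne' : (W:ℝ≥0∞) ≠ 0)]

lemma meas_sq {d : ℕ} {α : Type*} [MeasurableSpace α] {g : α → Euc d} (hg : Measurable g) :
    Measurable fun x => (‖g x‖₊ : ℝ≥0∞) ^ 2 :=
  (hg.nnnorm.coe_nnreal_ennreal).pow_const 2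

lemma meas_cost {d : ℕ} : Measurable fun p : Euc d × Euc d => (‖p.1 - p.2‖₊ : ℝ≥0∞) ^ 2 :=
  meas_sq (measurable_fst.sub measurable_snd)

-- L5: W2sq with a dirac on the right
lemma W2sq_dirac {d : ℕ} (Q : Measure (Euc d)) [IsProbabilityMeasure Q] (c : Euc d) :
    W2sq Q (Measure.dirac c) = ∫⁻ x, (‖x - c‖₊ : ℝ≥0∞) ^ 2 ∂Q := by
  have hmc : Measurable fun x : Euc d => (x, c) := measurable_id.prodMk measurable_const
  have hms : Measurable fun x : Euc d => (‖x - c‖₊ : ℝ≥0∞) ^ 2 :=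
    meas_sq (measurable_id.sub measurable_const)
  apply le_antisymm
  · have hcoup : IsCoupling (Q.map fun x => (x, c)) Q (Measure.dirac c) := by
      constructor
      · rw [Measure.map_map measurable_fst hmc,
          show (Prod.fst ∘ fun x : Euc d => (x, c)) = id from rfl, Measure.map_id]
      · rw [Measure.map_map measurable_snd hmc,
          show (Prod.snd ∘ fun x : Euc d => (x, c)) = fun _ => c from rfl, Measure.map_const]
        simp
    rw [W2sq]
    refine le_trans (iInf₂_le (Q.map fun x => (x, c)) hcoup) ?_
    rw [lintegral_map meas_cost hmc]
  · rw [W2sq]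
    refine le_iInf₂ ?_
    rintro γ ⟨h1, h2⟩
    refine le_of_eq ?_
    have hae : ∀ᵐ p ∂γ, p.2 = c := by
      have : γ (Prod.snd ⁻¹' {c}ᶜ) = 0 := by
        rw [← Measure.map_apply measurable_snd (MeasurableSet.singleton c).compl, h2]
        simp
      rw [ae_iff]; exact this
    calc ∫⁻ x, (‖x - c‖₊ : ℝ≥0∞) ^ 2 ∂Q
        = ∫⁻ p, (‖p.1 - c‖₊ : ℝ≥0∞) ^ 2 ∂γ := by rw [← h1, lintegral_map hms measurable_fst]
      _ = ∫⁻ p, (‖p.1 - p.2‖₊ : ℝ≥0∞) ^ 2 ∂γ := by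
          refine lintegral_congr_ae ?_
          filter_upwards [hae] with p hp
          rw [hp]

-- L6: map of a finset sum of measures
lemma map_finsetSum_meas {α β ι : Type*} [MeasurableSpace α] [MeasurableSpace β]
    (s : Finset ι) (μ : ι → Measure α) {f : α → β} (hf : Measurable f) :
    Measure.map f (∑ i ∈ s, μ i) = ∑ i ∈ s, Measure.map f (μ i) := by
  induction s using Finset.cons_induction with
  | empty => simp [Measure.map_zero]
  | cons a s ha ih => rw [Finset.sum_cons, Finset.sum_cons, Measure.map_add _ _ hf, ih]

lemma sum_split {M : Type*} [AddCommMonoid M] {N : ℕ} (i₀ : Fin N) (F : Fin N → M) :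
    ∑ i, F i = F i₀ + ∑ i ∈ Finset.univ.filter (fun i => i ≠ i₀), F i := by
  rw [Finset.filter_ne', Finset.add_sum_erase _ _ (Finset.mem_univ i₀)]

lemma centroid_ineq {E : Type*} [NormedAddCommGroup E] [InnerProductSpace ℝ E]
    {n : ℕ} (hn : (n : ℝ) ≠ 0) (p : Fin n → E) (x : E) :
    ∑ i, ‖(n : ℝ)⁻¹ • ∑ k, p k - p i‖ ^ 2 ≤ ∑ i, ‖x - p i‖ ^ 2 := by
  set m : E := (n : ℝ)⁻¹ • ∑ k, p k with hm
  have hsum : ∑ k, p k = (n : ℝ) • m := by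
    rw [hm, smul_smul, mul_inv_cancel₀ hn, one_smul]
  have expand : ∀ y : E, ∑ i, ‖y - p i‖ ^ 2
      = n * ‖y‖ ^ 2 - 2 * (inner ℝ y (∑ k, p k) : ℝ) + ∑ i, ‖p i‖ ^ 2 := by
    intro y
    rw [inner_sum, Finset.mul_sum]
    simp only [norm_sub_sq_real]
    rw [Finset.sum_add_distrib, Finset.sum_sub_distrib, Finset.sum_const, Finset.card_univ,
      Fintype.card_fin, nsmul_eq_mul]
  have h1 : (inner ℝ x (∑ k, p k) : ℝ) = n * inner ℝ x m := by
    rw [hsum, real_inner_smul_right]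
  have h2 : (inner ℝ m (∑ k, p k) : ℝ) = n * ‖m‖ ^ 2 := by
    rw [hsum, real_inner_smul_right, real_inner_self_eq_norm_sq]
  have key : ∑ i, ‖x - p i‖ ^ 2 = ∑ i, ‖m - p i‖ ^ 2 + n * ‖x - m‖ ^ 2 := by
    rw [expand x, expand m, h1, h2, norm_sub_sq_real x m]
    ring
  have : 0 ≤ (n : ℝ) * ‖x - m‖ ^ 2 := by positivity
  linarith

lemma pointwise_ineq {d N : ℕ} (hN : 0 < N) (i₀ : Fin N) (b : Fin N → Euc d) (x y : Euc d) :
    (‖(N : ℝ)⁻¹ • (y + ∑ i ∈ Finset.univ.filter (fun i => i ≠ i₀), b i) - y‖₊ : ℝ≥0∞) ^ 2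
      + ∑ i ∈ Finset.univ.filter (fun i => i ≠ i₀),
        (‖(N : ℝ)⁻¹ • (y + ∑ k ∈ Finset.univ.filter (fun k => k ≠ i₀), b k) - b i‖₊ : ℝ≥0∞) ^ 2
    ≤ (‖x - y‖₊ : ℝ≥0∞) ^ 2
      + ∑ i ∈ Finset.univ.filter (fun i => i ≠ i₀), (‖x - b i‖₊ : ℝ≥0∞) ^ 2 := by
  classical
  have hn : (N : ℝ) ≠ 0 := by exact_mod_cast hN.ne'
  set K := Finset.univ.filter (fun i : Fin N => i ≠ i₀) with hK
  set p : Fin N → Euc d := fun i => if i = i₀ then y else b i with hp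
  have hp0 : p i₀ = y := by simp [hp]
  have hpK : ∀ i ∈ K, p i = b i := by
    intro i hi
    rw [hK, Finset.mem_filter] at hi
    simp [hp, hi.2]
  have hsum : ∑ k, p k = y + ∑ i ∈ K, b i := by
    rw [sum_split i₀ p, hp0]
    exact congrArg _ (Finset.sum_congr rfl hpK)
  set m : Euc d := (N : ℝ)⁻¹ • (y + ∑ i ∈ K, b i) with hm
  have hR : ‖m - y‖ ^ 2 + ∑ i ∈ K, ‖m - b i‖ ^ 2
      ≤ ‖x - y‖ ^ 2 + ∑ i ∈ K, ‖x - b i‖ ^ 2 := by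
    have := centroid_ineq hn p x
    rw [hsum, ← hm] at this
    rw [sum_split i₀ (fun i => ‖m - p i‖ ^ 2), sum_split i₀ (fun i => ‖x - p i‖ ^ 2)] at this
    rw [hp0] at this
    have e1 : ∑ i ∈ K, ‖m - p i‖ ^ 2 = ∑ i ∈ K, ‖m - b i‖ ^ 2 :=
      Finset.sum_congr rfl (fun i hi => by rw [hpK i hi])
    have e2 : ∑ i ∈ K, ‖x - p i‖ ^ 2 = ∑ i ∈ K, ‖x - b i‖ ^ 2 :=
      Finset.sum_congr rfl (fun i hi => by rw [hpK i hi])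
    rw [e1, e2] at this
    exact this
  have hco : ∀ v : Euc d, (‖v‖₊ : ℝ≥0∞) ^ 2 = ENNReal.ofReal (‖v‖ ^ 2) := by
    intro v
    rw [ENNReal.ofReal_pow (norm_nonneg v), ← coe_nnnorm, ENNReal.ofReal_coe_nnreal]
  simp only [hco]
  rw [← ENNReal.ofReal_sum_of_nonneg (fun i _ => by positivity),
    ← ENNReal.ofReal_sum_of_nonneg (fun i _ => by positivity),
    ← ENNReal.ofReal_add (by positivity) (Finset.sum_nonneg (fun i _ => by positivity)),
    ← ENNReal.ofReal_add (by positivity) (Finset.sum_nonneg (fun i _ => by positivity))]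
  exact ENNReal.ofReal_le_ofReal hR

/-- tightness of the sparsity bound: if `P₁ = (1/W) Σ_j δ_{a_j}` with the
`a_j` distinct and `Pᵢ = δ_{b_i}` for `i = 2, …, N`, then
`P̄ = (1/W) Σ_j δ_{(a_j + b₂ + ⋯ + b_N)/N}` is a barycenter of `P₁, …, P_N`, and
`|supp(P̄)| = W = Σᵢ |supp(Pᵢ)| - N + 1`. -/
theorem stmt16 {d N W : ℕ} (hN : 0 < N) (hW : 0 < W)
    (a : Fin W → Euc d) (ha : Function.Injective a) (b : Fin N → Euc d)
    (P : Fin N → MeasureTheory.Measure (Euc d))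
    (hP1 : P ⟨0, hN⟩ = (W : ℝ≥0∞)⁻¹ • ∑ j, MeasureTheory.Measure.dirac (a j))
    (hPi : ∀ i : Fin N, i ≠ ⟨0, hN⟩ → P i = MeasureTheory.Measure.dirac (b i))
    (Pbar : MeasureTheory.Measure (Euc d))
    (hPbar : Pbar = (W : ℝ≥0∞)⁻¹ • ∑ j, MeasureTheory.Measure.dirac
      ((N : ℝ)⁻¹ • (a j + ∑ i ∈ Finset.univ.filter (fun i => i ≠ (⟨0, hN⟩ : Fin N)), b i))) :
    IsBarycenter P Pbar ∧
      (msupp Pbar).ncard = W ∧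
      W = (∑ i, (msupp (P i)).ncard) - N + 1 := by
  classical
  set i₀ : Fin N := ⟨0, hN⟩ with hi₀
  set K := Finset.univ.filter (fun i : Fin N => i ≠ i₀) with hKdef
  set mm : Euc d → Euc d := fun y => (N : ℝ)⁻¹ • (y + ∑ i ∈ K, b i) with hmm
  have hPbar' : Pbar = (W : ℝ≥0∞)⁻¹ • ∑ j, Measure.dirac (mm (a j)) := hPbar
  have hprob : IsProbabilityMeasure Pbar := by
    rw [hPbar']; exact isProb_unif hW _
  haveI := hprob
  have hmmeas : Measurable mm :=
    (measurable_id.add_const _).const_smul ((N : ℝ)⁻¹)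
  -- the "variance" function
  set F : Euc d → ℝ≥0∞ := fun y =>
    (‖mm y - y‖₊ : ℝ≥0∞) ^ 2 + ∑ i ∈ K, (‖mm y - b i‖₊ : ℝ≥0∞) ^ 2 with hF
  have hFmeas : Measurable F :=
    (meas_sq (hmmeas.sub measurable_id)).add
      (Finset.measurable_sum _ fun i _ => meas_sq (hmmeas.sub measurable_const))
  set V : ℝ≥0∞ := (W : ℝ≥0∞)⁻¹ * ∑ j, F (a j) with hV
  -- finite second moment
  have hfin : FinSecondMoment Pbar := by
    rw [FinSecondMoment, hPbar', lintegral_unif _ (fun x => (‖x‖₊ : ℝ≥0∞) ^ 2) (meas_sq measurable_id)]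
    refine ENNReal.mul_lt_top (by simpa using hW) ?_
    exact ENNReal.sum_lt_top.mpr fun j _ => ENNReal.pow_lt_top ENNReal.coe_lt_top
  -- upper bound: transport cost of Pbar
  have hub : ∑ i, W2sq Pbar (P i) ≤ V := by
    have hKterm : ∀ i ∈ K, W2sq Pbar (P i)
        = (W : ℝ≥0∞)⁻¹ * ∑ j, (‖mm (a j) - b i‖₊ : ℝ≥0∞) ^ 2 := by
      intro i hi
      rw [hPi i (Finset.mem_filter.mp hi).2, W2sq_dirac Pbar (b i), hPbar',
        lintegral_unif _ (fun x => (‖x - b i‖₊ : ℝ≥0∞) ^ 2)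
          (meas_sq (measurable_id.sub measurable_const))]
    have h0 : W2sq Pbar (P i₀)
        ≤ (W : ℝ≥0∞)⁻¹ * ∑ j, (‖mm (a j) - a j‖₊ : ℝ≥0∞) ^ 2 := by
      rw [hP1, W2sq]
      set γ₀ : Measure (Euc d × Euc d) :=
        (W : ℝ≥0∞)⁻¹ • ∑ j, Measure.dirac ((mm (a j), a j)) with hγ₀
      have hc : IsCoupling γ₀ Pbar ((W : ℝ≥0∞)⁻¹ • ∑ j, Measure.dirac (a j)) := by
        constructor
        · rw [hγ₀, Measure.map_smul, map_finsetSum_meas _ _ measurable_fst, hPbar']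
          congr 1
          exact Finset.sum_congr rfl fun j _ => Measure.map_dirac' measurable_fst _
        · rw [hγ₀, Measure.map_smul, map_finsetSum_meas _ _ measurable_snd]
          congr 1
          exact Finset.sum_congr rfl fun j _ => Measure.map_dirac' measurable_snd _
      refine le_trans (iInf₂_le γ₀ hc) (le_of_eq ?_)
      rw [hγ₀, lintegral_smul_measure, lintegral_finset_sum_measure]
      simp [lintegral_dirac' _ meas_cost]
    calc ∑ i, W2sq Pbar (P i)
        = W2sq Pbar (P i₀) + ∑ i ∈ K, W2sq Pbar (P i) := sum_split i₀ _
      _ ≤ (W : ℝ≥0∞)⁻¹ * ∑ j, (‖mm (a j) - a j‖₊ : ℝ≥0∞) ^ 2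
          + ∑ i ∈ K, (W : ℝ≥0∞)⁻¹ * ∑ j, (‖mm (a j) - b i‖₊ : ℝ≥0∞) ^ 2 := by
          exact add_le_add h0 (le_of_eq (Finset.sum_congr rfl hKterm))
      _ = V := by
          rw [hV, hF]
          simp only [Finset.sum_add_distrib, mul_add]
          congr 1
          rw [Finset.sum_comm, ← Finset.mul_sum]
  -- lower bound: every probability measure pays at least V
  have hlb : ∀ Q : Measure (Euc d), IsProbabilityMeasure Q →
      V ≤ ∑ i, W2sq Q (P i) := by
    intro Q hQ
    haveI := hQ
    rw [sum_split i₀ (fun i => W2sq Q (P i))]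
    have hKterm : ∑ i ∈ K, W2sq Q (P i)
        = ∑ i ∈ K, ∫⁻ x, (‖x - b i‖₊ : ℝ≥0∞) ^ 2 ∂Q :=
      Finset.sum_congr rfl fun i hi => by
        rw [hPi i (Finset.mem_filter.mp hi).2, W2sq_dirac Q (b i)]
    rw [hKterm, W2sq, ← tsub_le_iff_right]
    refine le_iInf₂ ?_
    rintro γ ⟨h1, h2⟩
    rw [tsub_le_iff_right]
    have hCγ : ∑ i ∈ K, ∫⁻ x, (‖x - b i‖₊ : ℝ≥0∞) ^ 2 ∂Q
        = ∑ i ∈ K, ∫⁻ p : Euc d × Euc d, (‖p.1 - b i‖₊ : ℝ≥0∞) ^ 2 ∂γ :=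
      Finset.sum_congr rfl fun i _ => by
        rw [← h1, lintegral_map (f := fun x => (‖x - b i‖₊ : ℝ≥0∞) ^ 2) (meas_sq (measurable_id.sub measurable_const)) measurable_fst]
    rw [hCγ, ← lintegral_finset_sum (f := fun i (p : Euc d × Euc d) => (‖p.1 - b i‖₊ : ℝ≥0∞) ^ 2) _ (fun i _ => meas_sq (measurable_fst.sub measurable_const)),
      ← lintegral_add_left meas_cost]
    calc V = ∫⁻ y, F y ∂(P i₀) := by
          rw [hP1, lintegral_unif _ _ hFmeas]
      _ = ∫⁻ p : Euc d × Euc d, F p.2 ∂γ := by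
          rw [← h2, lintegral_map hFmeas measurable_snd]
      _ ≤ _ := by
          refine lintegral_mono fun p => ?_
          exact pointwise_ineq hN i₀ b p.1 p.2
  -- support computations
  have hminj : Function.Injective fun j => mm (a j) := by
    intro j k h
    have hn : (N : ℝ)⁻¹ ≠ 0 := by
      simp [Nat.cast_ne_zero.mpr hN.ne']
    have h2 : a j + ∑ i ∈ K, b i = a k + ∑ i ∈ K, b i :=
      smul_right_injective (Euc d) hn h
    exact ha (add_right_cancel h2)
  have hsuppPbar : (msupp Pbar).ncard = W := by
    rw [hPbar', msupp_unif hW, ← Nat.card_coe_set_eq,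
      Nat.card_range_of_injective hminj, Nat.card_eq_fintype_card, Fintype.card_fin]
  have hsuppsum : ∑ i, (msupp (P i)).ncard = W + (N - 1) := by
    rw [sum_split i₀ (fun i => (msupp (P i)).ncard)]
    have h1 : (msupp (P i₀)).ncard = W := by
      rw [hP1, msupp_unif hW, ← Nat.card_coe_set_eq,
        Nat.card_range_of_injective ha, Nat.card_eq_fintype_card, Fintype.card_fin]
    have h2 : ∑ i ∈ K, (msupp (P i)).ncard = N - 1 := by
      rw [Finset.sum_congr rfl (fun i hi => by
        rw [hPi i (Finset.mem_filter.mp hi).2, msupp_dirac, Set.ncard_singleton])]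
      rw [Finset.sum_const, smul_eq_mul, mul_one, hKdef, Finset.filter_ne',
        Finset.card_erase_of_mem (Finset.mem_univ i₀), Finset.card_univ, Fintype.card_fin]
    rw [h1, h2]
  refine ⟨⟨hprob, hfin, fun Q hQ _ => le_trans hub (hlb Q hQ)⟩, hsuppPbar, ?_⟩
  rw [hsuppsum]
  omega
end
end
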